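/- arXiv:1810.09922 — 2 statements merged into one kernel-verified Lean document; each statement's English description precedes it below -/
import Mathlib

section
/- Let τ induce a Markov random dynamical system on a compact metric space Y with transition operator M_τ, and let (y,i) ∈ Y×V. If τ̃_i({ξ ∈ X_i(S_τ) : y ∈ J_ξ}) = 0, then the family {n ↦ (M_τ*)ⁿ(δ_{(y,i)})} of iterated adjoint maps restricted to point masses is equicontinuous at (y,i); equivalently, for every φ ∈ C(Y×V), the family {M_τⁿφ}_{n∈ℕ} is equicontinuous at (y,i). -/
open MeasureTheory Classical
set_option linter.unusedSectionVars false
set_option linter.deprecated false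

/-- The composition `γ_{n+1} ∘ ⋯ ∘ γ_1` of the first `n+1` maps of a sequence
(indexed from `0`). -/
def comps {Y : Type*} [TopologicalSpace Y] (γ : ℕ → C(Y, Y)) : ℕ → Y → Y
  | 0 => ⇑(γ 0)
  | n + 1 => ⇑(γ (n + 1)) ∘ comps γ n

/-- The Julia set of a family `F` of self-maps of `Y`: the set of points `y` having no
neighborhood on which `F` is equicontinuous. -/
def JuliaOf {Y : Type*} [UniformSpace Y] (F : Set (Y → Y)) : Set Y :=
  {y | ¬ ∃ U ∈ nhds y, ∀ z ∈ U, EquicontinuousAt (fun f : F => (f : Y → Y)) z}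

/-- The transition operator `M_τ` of a Markov random dynamical system:
`M_τ φ (y, i) = Σ_j ∫_{Γ_{ij}} φ(γ(y), j) dτ_{ij}(γ)`. -/
noncomputable def Mtau {Y V : Type*} [TopologicalSpace Y] [Fintype V]
    [MeasurableSpace C(Y, Y)] (τ : V → V → Measure C(Y, Y))
    (φ : Y × V → ℂ) : Y × V → ℂ :=
  fun p => ∑ j : V, ∫ γ : C(Y, Y), φ (γ p.1, j) ∂(τ p.2 j)

section Aux

variable {Y V : Type*} [MetricSpace Y] [CompactSpace Y] [Fintype V]
  [TopologicalSpace V] [DiscreteTopology V]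
  [MeasurableSpace Y] [BorelSpace Y]
  [MeasurableSpace C(Y, Y)] [BorelSpace C(Y, Y)]
  [MeasurableSpace V] [MeasurableSingletonClass V]

lemma comps_succ (γ : ℕ → C(Y, Y)) (n : ℕ) (z : Y) :
    comps γ (n + 1) z = γ (n + 1) (comps γ n z) := rfl

lemma comps_congr {γ₁ γ₂ : ℕ → C(Y, Y)} :
    ∀ n, (∀ k, k ≤ n → γ₁ k = γ₂ k) → comps γ₁ n = comps γ₂ n
  | 0, h => by
      show ⇑(γ₁ 0) = ⇑(γ₂ 0); rw [h 0 le_rfl]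
  | n + 1, h => by
      show ⇑(γ₁ (n + 1)) ∘ comps γ₁ n = ⇑(γ₂ (n + 1)) ∘ comps γ₂ n
      rw [h (n + 1) le_rfl, comps_congr n fun k hk => h k (hk.trans n.le_succ)]

lemma comps_cont (γ : ℕ → C(Y, Y)) : ∀ n, Continuous (comps γ n)
  | 0 => (γ 0).continuous
  | n + 1 => (γ (n + 1)).continuous.comp (comps_cont γ n)

/-- The composition of a finite vector of maps. -/
def compsV {n : ℕ} (g : Fin (n + 1) → C(Y, Y)) (z : Y) : Y :=
  comps (fun k => g ⟨min k n, Nat.lt_succ_of_le (min_le_right k n)⟩) n z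

lemma compsV_zero (g : Fin 1 → C(Y, Y)) (z : Y) : compsV g z = g 0 z := by
  show (g ⟨min 0 0, Nat.lt_succ_of_le (min_le_right 0 0)⟩) z = g 0 z
  congr 1

lemma compsV_succ {n : ℕ} (g : Fin (n + 2) → C(Y, Y)) (z : Y) :
    compsV g z = g (Fin.last (n + 1)) (compsV (fun k => g k.castSucc) z) := by
  show (g ⟨min (n + 1) (n + 1), Nat.lt_succ_of_le (min_le_right (n + 1) (n + 1))⟩)
      (comps (fun k => g ⟨min k (n + 1), Nat.lt_succ_of_le (min_le_right k (n + 1))⟩) n z)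
    = g (Fin.last (n + 1)) (compsV (fun k => g k.castSucc) z)
  congr 1
  · congr 1
    exact Fin.ext (by simp)
  · exact congrFun (comps_congr n fun k hk => by
      congr 1
      exact Fin.ext (by simp [Nat.min_eq_left hk, Nat.min_eq_left (hk.trans n.le_succ)])) z

lemma measurable_eval : Measurable fun p : C(Y, Y) × Y => p.1 p.2 :=
  ContinuousEval.continuous_eval.measurable

lemma measurable_compsOmega (n : ℕ) (z : Y) :
    Measurable fun ω : ℕ → C(Y, Y) × (V × V) => comps (fun k => (ω k).1) n z := by
  induction n with
  | zero =>
      exact measurable_eval.comp ((measurable_pi_apply 0).fst.prodMk measurable_const)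
  | succ n ih =>
      simp only [comps_succ]
      exact measurable_eval.comp ((measurable_pi_apply (n + 1)).fst.prodMk ih)

lemma continuous_compsV {n : ℕ} (z : Y) :
    Continuous fun g : Fin (n + 1) → C(Y, Y) => compsV g z := by
  induction n with
  | zero =>
      simp only [compsV_zero]
      exact (continuous_eval_const z).comp (continuous_apply 0)
  | succ n ih =>
      simp only [compsV_succ]
      have h3 : Continuous fun g : Fin (n + 2) → C(Y, Y) =>
          compsV (fun k => g k.castSucc) z := by
        exact Continuous.comp (g := fun g : Fin (n + 1) → C(Y, Y) => compsV g z)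
          (f := fun (g : Fin (n + 2) → C(Y, Y)) (k : Fin (n + 1)) => g k.castSucc)
          ih (continuous_pi fun k => continuous_apply k.castSucc)
      have h2 : Continuous fun g : Fin (n + 2) → C(Y, Y) =>
          ((g (Fin.last (n + 1)), compsV (fun k => g k.castSucc) z) : C(Y, Y) × Y) :=
        (continuous_apply (Fin.last (n + 1))).prodMk h3
      exact (ContinuousEval.continuous_eval (F := C(Y, Y)) (X := Y) (Y := Y)).comp h2

lemma measurable_compsV {n : ℕ} (z : Y) :
    Measurable fun g : Fin (n + 1) → C(Y, Y) => compsV g z :=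
  (continuous_compsV z).measurable

lemma opensMeasurable_V : OpensMeasurableSpace V :=
  ⟨fun s _ => s.toFinite.measurableSet⟩

lemma aux_integrable {α : Type*} [MeasurableSpace α] (μ : Measure α) [IsFiniteMeasure μ]
    {f : α → ℂ} (hf : AEStronglyMeasurable f μ) {C : ℝ} (hC : ∀ a, ‖f a‖ ≤ C) :
    Integrable f μ :=
  (integrable_const C).mono' hf (Filter.Eventually.of_forall hC)

variable (τ : V → V → Measure C(Y, Y))

lemma mtau_norm_le (hfin : ∀ a b, IsFiniteMeasure (τ a b))
    (hrow : ∀ a : V, ∑ b : V, τ a b Set.univ = 1)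
    {φ : Y × V → ℂ} {C : ℝ} (hφC : ∀ p, ‖φ p‖ ≤ C) : ∀ p, ‖Mtau τ φ p‖ ≤ C := by
  intro p
  have h1 : ∀ j : V, ‖∫ γ, φ (γ p.1, j) ∂τ p.2 j‖ ≤ C * (τ p.2 j Set.univ).toReal := by
    intro j
    haveI := hfin p.2 j
    exact norm_integral_le_of_norm_le_const (Filter.Eventually.of_forall fun γ => hφC _)
  calc ‖Mtau τ φ p‖ ≤ ∑ j : V, ‖∫ γ, φ (γ p.1, j) ∂τ p.2 j‖ := norm_sum_le _ _
    _ ≤ ∑ j : V, C * (τ p.2 j Set.univ).toReal := Finset.sum_le_sum fun j _ => h1 j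
    _ = C * (∑ j : V, τ p.2 j Set.univ).toReal := by
        rw [ENNReal.toReal_sum fun j _ => (hfin p.2 j).measure_univ_lt_top.ne,
          Finset.mul_sum]
    _ = C := by rw [hrow p.2]; simp

lemma mtau_cont (hfin : ∀ a b, IsFiniteMeasure (τ a b))
    {φ : Y × V → ℂ} (hφ : Continuous φ) {C : ℝ} (hφC : ∀ p, ‖φ p‖ ≤ C) :
    Continuous (Mtau τ φ) := by
  rw [continuous_iff_continuousAt]
  rintro ⟨y₀, j₀⟩
  have h1 : Continuous (fun p : Y × V => ∑ j : V, ∫ γ, φ (γ p.1, j) ∂τ j₀ j) := by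
    apply continuous_finset_sum
    intro j _
    have h2 : Continuous fun w : Y => ∫ γ, φ (γ w, j) ∂τ j₀ j := by
      haveI := hfin j₀ j
      apply continuous_of_dominated (bound := fun _ => C)
      · intro w
        exact (hφ.comp ((continuous_eval_const w).prodMk
          continuous_const)).aestronglyMeasurable
      · intro w
        exact Filter.Eventually.of_forall fun γ => hφC _
      · exact integrable_const C
      · exact Filter.Eventually.of_forall fun γ =>
          hφ.comp (γ.continuous.prodMk continuous_const)
    exact h2.comp continuous_fst
  apply h1.continuousAt.congr
  have hset : (Set.univ ×ˢ {j₀} : Set (Y × V)) ∈ nhds (y₀, j₀) :=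
    prod_mem_nhds Filter.univ_mem ((isOpen_discrete _).mem_nhds rfl)
  filter_upwards [hset] with p hp
  have hp2 : p.2 = j₀ := hp.2
  simp only [Mtau, hp2]

variable (τtil : V → Measure (ℕ → C(Y, Y) × (V × V)))

lemma measurable_proj (N : ℕ) :
    Measurable fun (ω : ℕ → C(Y, Y) × (V × V)) (k : Fin (N + 1)) => (ω (k : ℕ)).1 :=
  measurable_pi_lambda _ fun k => (measurable_pi_apply _).fst

lemma measurableSet_Sq (N : ℕ) (q : Fin (N + 1) → V × V) :
    MeasurableSet {ω : ℕ → C(Y, Y) × (V × V) | ∀ k : Fin (N + 1), (ω (k : ℕ)).2 = q k} := by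
  have h : {ω : ℕ → C(Y, Y) × (V × V) | ∀ k : Fin (N + 1), (ω (k : ℕ)).2 = q k}
      = ⋂ k : Fin (N + 1), (fun ω : ℕ → C(Y, Y) × (V × V) => (ω (k : ℕ)).2) ⁻¹' {q k} := by
    ext ω; simp [Set.mem_iInter]
  rw [h]
  exact MeasurableSet.iInter fun k =>
    (measurable_pi_apply _).snd (measurableSet_singleton _)

lemma map_restrict_eq
    (hfin : ∀ a b, IsFiniteMeasure (τ a b))
    (hcyl : ∀ i : V, ∀ N : ℕ, ∀ A : Fin (N + 1) → Set C(Y, Y),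
      (∀ k, MeasurableSet (A k)) → ∀ q : Fin (N + 1) → V × V,
      τtil i {ω | ∀ k : Fin (N + 1), (ω (k : ℕ)).1 ∈ A k ∧ (ω (k : ℕ)).2 = q k}
        = if (q 0).1 = i ∧ ∀ k : Fin N, (q k.castSucc).2 = (q k.succ).1 then
            ∏ k : Fin (N + 1), τ (q k).1 (q k).2 (A k)
          else 0)
    (i : V) (N : ℕ) (q : Fin (N + 1) → V × V) :
    Measure.map (fun (ω : ℕ → C(Y, Y) × (V × V)) (k : Fin (N + 1)) => (ω (k : ℕ)).1)
        ((τtil i).restrict {ω | ∀ k : Fin (N + 1), (ω (k : ℕ)).2 = q k})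
      = if (q 0).1 = i ∧ ∀ k : Fin N, (q k.castSucc).2 = (q k.succ).1 then
          Measure.pi fun k => τ (q k).1 (q k).2
        else 0 := by
  haveI : ∀ a b, SigmaFinite (τ a b) := fun a b => by haveI := hfin a b; infer_instance
  by_cases hv : (q 0).1 = i ∧ ∀ k : Fin N, (q k.castSucc).2 = (q k.succ).1
  · rw [if_pos hv]
    refine (Measure.pi_eq fun A hA => ?_).symm
    rw [Measure.map_apply (measurable_proj N) (MeasurableSet.univ_pi hA),
      Measure.restrict_apply ((measurable_proj N) (MeasurableSet.univ_pi hA))]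
    have hset : (fun (ω : ℕ → C(Y, Y) × (V × V)) (k : Fin (N + 1)) => (ω (k : ℕ)).1) ⁻¹'
          Set.pi Set.univ A ∩ {ω | ∀ k : Fin (N + 1), (ω (k : ℕ)).2 = q k}
        = {ω | ∀ k : Fin (N + 1), (ω (k : ℕ)).1 ∈ A k ∧ (ω (k : ℕ)).2 = q k} := by
      ext ω
      simp only [Set.mem_inter_iff, Set.mem_preimage, Set.mem_pi, Set.mem_univ, true_implies,
        Set.mem_setOf_eq, forall_and]
    rw [hset, hcyl i N A hA q, if_pos hv]
  · rw [if_neg hv]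
    apply Measure.measure_univ_eq_zero.mp
    rw [Measure.map_apply (measurable_proj N) MeasurableSet.univ, Set.preimage_univ,
      Measure.restrict_apply MeasurableSet.univ, Set.univ_inter]
    have hset : {ω : ℕ → C(Y, Y) × (V × V) | ∀ k : Fin (N + 1), (ω (k : ℕ)).2 = q k}
        = {ω | ∀ k : Fin (N + 1), (ω (k : ℕ)).1 ∈ (fun _ => Set.univ : Fin (N + 1) → Set C(Y, Y)) k
            ∧ (ω (k : ℕ)).2 = q k} := by
      ext ω; simp
    rw [hset, hcyl i N (fun _ => Set.univ) (fun _ => MeasurableSet.univ) q, if_neg hv]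

lemma setIntegral_eq
    (hfin : ∀ a b, IsFiniteMeasure (τ a b))
    (hcyl : ∀ i : V, ∀ N : ℕ, ∀ A : Fin (N + 1) → Set C(Y, Y),
      (∀ k, MeasurableSet (A k)) → ∀ q : Fin (N + 1) → V × V,
      τtil i {ω | ∀ k : Fin (N + 1), (ω (k : ℕ)).1 ∈ A k ∧ (ω (k : ℕ)).2 = q k}
        = if (q 0).1 = i ∧ ∀ k : Fin N, (q k.castSucc).2 = (q k.succ).1 then
            ∏ k : Fin (N + 1), τ (q k).1 (q k).2 (A k)
          else 0)
    (i : V) (N : ℕ) (q : Fin (N + 1) → V × V)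
    (F : (Fin (N + 1) → C(Y, Y)) → ℂ) (hF : Measurable F) :
    ∫ ω in {ω : ℕ → C(Y, Y) × (V × V) | ∀ k : Fin (N + 1), (ω (k : ℕ)).2 = q k},
        F (fun k => (ω (k : ℕ)).1) ∂(τtil i)
      = if (q 0).1 = i ∧ ∀ k : Fin N, (q k.castSucc).2 = (q k.succ).1 then
          ∫ g, F g ∂(Measure.pi fun k => τ (q k).1 (q k).2)
        else 0 := by
  have h1 : ∫ ω in {ω : ℕ → C(Y, Y) × (V × V) | ∀ k : Fin (N + 1), (ω (k : ℕ)).2 = q k},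
        F (fun k => (ω (k : ℕ)).1) ∂(τtil i)
      = ∫ g, F g ∂(Measure.map (fun (ω : ℕ → C(Y, Y) × (V × V)) (k : Fin (N + 1)) => (ω (k : ℕ)).1)
          ((τtil i).restrict {ω | ∀ k : Fin (N + 1), (ω (k : ℕ)).2 = q k})) :=
    (integral_map (measurable_proj N).aemeasurable hF.aestronglyMeasurable).symm
  rw [h1, map_restrict_eq τ τtil hfin hcyl i N q]
  split
  · rfl
  · exact integral_zero_measure F

lemma integrable_innerInt
    (hfin : ∀ a b, IsFiniteMeasure (τ a b))
    {φ : Y × V → ℂ} (hφ : Continuous φ) {C : ℝ} (hC : ∀ p, ‖φ p‖ ≤ C)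
    (a b : V) (z : Y) {n : ℕ} (μs : Fin (n + 1) → Measure C(Y, Y))
    [∀ k, IsFiniteMeasure (μs k)] :
    Integrable (fun g : Fin (n + 1) → C(Y, Y) => ∫ γ, φ (γ (compsV g z), b) ∂τ a b)
      (Measure.pi μs) := by
  haveI := hfin a b
  haveI : SigmaFinite (τ a b) := inferInstance
  have hcont : Continuous fun w : Y => ∫ γ, φ (γ w, b) ∂τ a b := by
    apply continuous_of_dominated (bound := fun _ => C)
    · intro w
      exact (hφ.comp ((continuous_eval_const w).prodMk
        continuous_const)).aestronglyMeasurable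
    · intro w
      exact Filter.Eventually.of_forall fun γ => hC _
    · exact integrable_const C
    · exact Filter.Eventually.of_forall fun γ =>
        hφ.comp (γ.continuous.prodMk continuous_const)
  apply aux_integrable _ ((hcont.comp (continuous_compsV z)).aestronglyMeasurable)
  intro g
  exact norm_integral_le_of_norm_le_const (Filter.Eventually.of_forall fun γ => hC _)

lemma claimC (hfin : ∀ a b, IsFiniteMeasure (τ a b))
    (hrow : ∀ a : V, ∑ b : V, τ a b Set.univ = 1) :
    ∀ (n : ℕ) (φ : Y × V → ℂ), Continuous φ → ∀ {C : ℝ}, (∀ p, ‖φ p‖ ≤ C) → ∀ (z : Y) (i : V),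
    (Mtau τ)^[n + 1] φ (z, i)
      = ∑ q : Fin (n + 1) → V × V,
          if (q 0).1 = i ∧ ∀ k : Fin n, (q k.castSucc).2 = (q k.succ).1 then
            ∫ g, φ (compsV g z, (q (Fin.last n)).2) ∂(Measure.pi fun k => τ (q k).1 (q k).2)
          else 0 := by
  haveI : ∀ a b, SigmaFinite (τ a b) := fun a b => by haveI := hfin a b; infer_instance
  intro n
  induction n with
  | zero =>
      intro φ hφ C hC z i
      have hsum : ∀ f : V → ℂ, (∑ a : V, if a = i then f a else 0) = f i := by
        intro f
        rw [Finset.sum_eq_single_of_mem i (Finset.mem_univ i) fun b _ hb => if_neg hb]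
        rw [if_pos rfl]
      have hL : (Mtau τ)^[1] φ (z, i) = ∑ b : V, ∫ γ, φ (γ z, b) ∂τ i b := by
        rw [Function.iterate_one]; rfl
      rw [hL, ← Equiv.sum_comp (Equiv.funUnique (Fin 1) (V × V)).symm]
      have hterm : ∀ p : V × V,
          (if (((Equiv.funUnique (Fin 1) (V × V)).symm p) 0).1 = i ∧
              ∀ k : Fin 0, ((((Equiv.funUnique (Fin 1) (V × V)).symm p)) k.castSucc).2
                = ((((Equiv.funUnique (Fin 1) (V × V)).symm p)) k.succ).1 then
            ∫ g, φ (compsV g z, (((Equiv.funUnique (Fin 1) (V × V)).symm p) (Fin.last 0)).2)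
              ∂(Measure.pi fun k => τ ((((Equiv.funUnique (Fin 1) (V × V)).symm p)) k).1
                  ((((Equiv.funUnique (Fin 1) (V × V)).symm p)) k).2)
          else 0)
          = if p.1 = i then ∫ γ, φ (γ z, p.2) ∂τ p.1 p.2 else 0 := by
        intro p
        have he : ∀ k : Fin 1, ((Equiv.funUnique (Fin 1) (V × V)).symm p) k = p := fun k => rfl
        simp only [he]
        have hempty : (∀ k : Fin 0, (p.2 : V) = p.1) ↔ True := by
          simp
        have hInt : ∫ g, φ (compsV g z, p.2) ∂(Measure.pi fun _ : Fin 1 => τ p.1 p.2)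
            = ∫ γ, φ (γ z, p.2) ∂τ p.1 p.2 := by
          haveI := hfin p.1 p.2
          have h := (measurePreserving_funUnique (τ p.1 p.2) (Fin 1)).integral_comp
            (MeasurableEquiv.funUnique (Fin 1) C(Y, Y)).measurableEmbedding
            (fun γ : C(Y, Y) => φ (γ z, p.2))
          rw [← h]
          apply integral_congr_ae
          apply Filter.Eventually.of_forall
          intro g
          show φ (compsV g z, p.2) = φ (((MeasurableEquiv.funUnique (Fin 1) C(Y, Y)) g) z, p.2)
          rw [compsV_zero]
          rfl
        rw [hInt]
        simp
      rw [Finset.sum_congr rfl fun p _ => hterm p]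
      rw [Fintype.sum_prod_type]
      symm
      rw [Finset.sum_eq_single_of_mem i (Finset.mem_univ i)
        (fun a _ ha => Finset.sum_eq_zero fun b _ => if_neg ha)]
      apply Finset.sum_congr rfl
      intro b _
      rw [if_pos rfl]
  | succ n ih =>
      intro φ hφ C hC z i
      have hψC : ∀ p, ‖Mtau τ φ p‖ ≤ C := mtau_norm_le τ hfin hrow hC
      have hψ : Continuous (Mtau τ φ) := mtau_cont τ hfin hφ hC
      rw [Function.iterate_succ_apply, ih (Mtau τ φ) hψ hψC z i]
      set E := Fin.insertNthEquiv (fun _ : Fin (n + 2) => V × V) (Fin.last (n + 1)) with hE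
      rw [← Equiv.sum_comp E, Fintype.sum_prod_type, Finset.sum_comm]
      apply Finset.sum_congr rfl
      intro q _
      have hq'last : ∀ p : V × V, E (p, q) (Fin.last (n + 1)) = p := by
        intro p
        rw [hE]
        simp only [Fin.insertNthEquiv_apply]
        exact Fin.insertNth_apply_same _ _ _
      have hq'cast : ∀ (p : V × V) (k : Fin (n + 1)), E (p, q) k.castSucc = q k := by
        intro p k
        rw [hE]
        simp only [Fin.insertNthEquiv_apply]
        rw [← Fin.succAbove_last]
        exact Fin.insertNth_apply_succAbove _ _ _ _
      have hvalid : ∀ p : V × V,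
          (((E (p, q)) 0).1 = i ∧
            ∀ k : Fin (n + 1), ((E (p, q)) k.castSucc).2 = ((E (p, q)) k.succ).1)
          ↔ (((q 0).1 = i ∧ ∀ k : Fin n, (q k.castSucc).2 = (q k.succ).1)
              ∧ (q (Fin.last n)).2 = p.1) := by
        intro p
        rw [Fin.forall_fin_succ'
          (P := fun k : Fin (n + 1) => ((E (p, q)) k.castSucc).2 = ((E (p, q)) k.succ).1)]
        have h0 : (0 : Fin (n + 2)) = (0 : Fin (n + 1)).castSucc := by simp
        rw [h0, hq'cast]
        have hB : ∀ k : Fin n, (((E (p, q)) (k.castSucc).castSucc).2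
              = ((E (p, q)) (k.castSucc).succ).1)
            ↔ ((q k.castSucc).2 = (q k.succ).1) := by
          intro k
          rw [hq'cast, Fin.succ_castSucc, hq'cast]
        have hCc : (((E (p, q)) ((Fin.last n).castSucc)).2 = ((E (p, q)) (Fin.last n).succ).1)
            ↔ ((q (Fin.last n)).2 = p.1) := by
          rw [hq'cast, Fin.succ_last, hq'last]
        rw [forall_congr' hB, hCc, and_assoc]
      -- now compute both sides
      by_cases hvq : (q 0).1 = i ∧ ∀ k : Fin n, (q k.castSucc).2 = (q k.succ).1
      · rw [if_pos hvq]
        haveI : ∀ k : Fin (n + 1), IsFiniteMeasure (τ (q k).1 (q k).2) := fun k => hfin _ _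
        have hMt : ∀ g : Fin (n + 1) → C(Y, Y),
            Mtau τ φ (compsV g z, (q (Fin.last n)).2)
              = ∑ b : V, ∫ γ, φ (γ (compsV g z), b) ∂τ (q (Fin.last n)).2 b := fun g => rfl
        rw [integral_congr_ae (Filter.Eventually.of_forall fun g => hMt g)]
        rw [integral_finset_sum Finset.univ fun b _ =>
          integrable_innerInt τ hfin hφ hC (q (Fin.last n)).2 b z _]
        -- RHS: sum over p
        have hterm : ∀ p : V × V,
            (if ((E (p, q)) 0).1 = i ∧
                (∀ k : Fin (n + 1), ((E (p, q)) k.castSucc).2 = ((E (p, q)) k.succ).1) then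
              ∫ g, φ (compsV g z, ((E (p, q)) (Fin.last (n + 1))).2)
                ∂(Measure.pi fun k => τ ((E (p, q)) k).1 ((E (p, q)) k).2)
            else 0)
            = if (q (Fin.last n)).2 = p.1 then
                ∫ g, ∫ γ, φ (γ (compsV g z), p.2) ∂τ p.1 p.2
                  ∂(Measure.pi fun k => τ (q k).1 (q k).2)
              else 0 := by
          intro p
          have hcond : (((E (p, q)) 0).1 = i ∧
              (∀ k : Fin (n + 1), ((E (p, q)) k.castSucc).2 = ((E (p, q)) k.succ).1))
              ↔ ((q (Fin.last n)).2 = p.1) := (hvalid p).trans (and_iff_right hvq)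
          rw [if_congr hcond rfl rfl]
          by_cases hp : (q (Fin.last n)).2 = p.1
          · rw [if_pos hp, if_pos hp]
            -- unfold the pi integral over Fin (n+2)
            haveI : ∀ k : Fin (n + 2), IsFiniteMeasure (τ ((E (p, q)) k).1 ((E (p, q)) k).2) :=
              fun k => hfin _ _
            have hMP := measurePreserving_piFinSuccAbove
              (fun k : Fin (n + 2) => τ ((E (p, q)) k).1 ((E (p, q)) k).2) (Fin.last (n + 1))
            have hInt := hMP.integral_comp
              (MeasurableEquiv.piFinSuccAbove (fun _ : Fin (n + 2) => C(Y, Y))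
                (Fin.last (n + 1))).measurableEmbedding
              (fun x : C(Y, Y) × (Fin (n + 1) → C(Y, Y)) => φ (x.1 (compsV x.2 z), p.2))
            have hLHSeq : ∀ g' : Fin (n + 2) → C(Y, Y),
                (fun x : C(Y, Y) × (Fin (n + 1) → C(Y, Y)) => φ (x.1 (compsV x.2 z), p.2))
                  ((MeasurableEquiv.piFinSuccAbove (fun _ : Fin (n + 2) => C(Y, Y))
                    (Fin.last (n + 1))) g')
                = φ (compsV g' z, ((E (p, q)) (Fin.last (n + 1))).2) := by
              intro g'
              have h1 : (MeasurableEquiv.piFinSuccAbove (fun _ : Fin (n + 2) => C(Y, Y))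
                  (Fin.last (n + 1))) g'
                  = (g' (Fin.last (n + 1)), fun j => g' ((Fin.last (n + 1)).succAbove j)) := rfl
              rw [h1, hq'last]
              simp only [Fin.succAbove_last]
              rw [← compsV_succ]
            rw [← integral_congr_ae (Filter.Eventually.of_forall hLHSeq), hInt]
            -- identify the product measure
            have hmeas1 : τ ((E (p, q)) (Fin.last (n + 1))).1 ((E (p, q)) (Fin.last (n + 1))).2
                = τ p.1 p.2 := by rw [hq'last]
            have hmeas2 : (fun j : Fin (n + 1) =>
                  τ ((E (p, q)) ((Fin.last (n + 1)).succAbove j)).1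
                    ((E (p, q)) ((Fin.last (n + 1)).succAbove j)).2)
                = fun j => τ (q j).1 (q j).2 := by
              funext j
              rw [Fin.succAbove_last, hq'cast]
            rw [hmeas1, hmeas2]
            -- Fubini
            haveI := hfin p.1 p.2
            have hf : Integrable (fun x : C(Y, Y) × (Fin (n + 1) → C(Y, Y)) =>
                φ (x.1 (compsV x.2 z), p.2))
                ((τ p.1 p.2).prod (Measure.pi fun k => τ (q k).1 (q k).2)) := by
              apply aux_integrable
              · have hc : Continuous fun x : C(Y, Y) × (Fin (n + 1) → C(Y, Y)) =>
                    φ (x.1 (compsV x.2 z), p.2) := by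
                  apply hφ.comp
                  apply Continuous.prodMk _ continuous_const
                  exact (ContinuousEval.continuous_eval (F := C(Y, Y)) (X := Y) (Y := Y)).comp
                    (continuous_fst.prodMk ((continuous_compsV z).comp continuous_snd))
                exact hc.aestronglyMeasurable
              · intro x; exact hC _
            rw [integral_prod_symm _ hf]
          · rw [if_neg hp, if_neg hp]
        rw [Finset.sum_congr rfl fun p _ => hterm p]
        rw [Fintype.sum_prod_type]
        symm
        rw [Finset.sum_eq_single_of_mem ((q (Fin.last n)).2) (Finset.mem_univ _)
          (fun a _ ha => Finset.sum_eq_zero fun b _ => if_neg fun h => ha h.symm)]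
        apply Finset.sum_congr rfl
        intro b _
        rw [if_pos rfl]
      · rw [if_neg hvq]
        symm
        apply Finset.sum_eq_zero
        intro p _
        rw [if_neg]
        rw [hvalid p]
        exact fun h => hvq h.1

lemma claimE (hfin : ∀ a b, IsFiniteMeasure (τ a b))
    (hrow : ∀ a : V, ∑ b : V, τ a b Set.univ = 1)
    (hcyl : ∀ i : V, ∀ N : ℕ, ∀ A : Fin (N + 1) → Set C(Y, Y),
      (∀ k, MeasurableSet (A k)) → ∀ q : Fin (N + 1) → V × V,
      τtil i {ω | ∀ k : Fin (N + 1), (ω (k : ℕ)).1 ∈ A k ∧ (ω (k : ℕ)).2 = q k}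
        = if (q 0).1 = i ∧ ∀ k : Fin N, (q k.castSucc).2 = (q k.succ).1 then
            ∏ k : Fin (N + 1), τ (q k).1 (q k).2 (A k)
          else 0)
    (i : V) (hfin' : IsFiniteMeasure (τtil i))
    (n : ℕ) (φ : Y × V → ℂ) (hφ : Continuous φ) {C : ℝ}
    (hC : ∀ p, ‖φ p‖ ≤ C) (z : Y) :
    (Mtau τ)^[n + 1] φ (z, i)
      = ∫ ω, φ (comps (fun k => (ω k).1) n z, ((ω n).2).2) ∂(τtil i) := by
  haveI := hfin'
  rw [claimC τ hfin hrow n φ hφ hC z i]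
  have hcont : ∀ c : V, Continuous fun w : Y => φ (w, c) :=
    fun c => hφ.comp (continuous_id.prodMk continuous_const)
  have hFmeas : ∀ q : Fin (n + 1) → V × V,
      Measurable fun g : Fin (n + 1) → C(Y, Y) => φ (compsV g z, (q (Fin.last n)).2) :=
    fun q => ((hcont _).measurable).comp (measurable_compsV z)
  have hstep : ∀ q : Fin (n + 1) → V × V,
      (if (q 0).1 = i ∧ ∀ k : Fin n, (q k.castSucc).2 = (q k.succ).1 then
          ∫ g, φ (compsV g z, (q (Fin.last n)).2) ∂(Measure.pi fun k => τ (q k).1 (q k).2)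
        else 0)
      = ∫ ω in {ω : ℕ → C(Y, Y) × (V × V) | ∀ k : Fin (n + 1), (ω (k : ℕ)).2 = q k},
          φ (compsV (fun k : Fin (n + 1) => (ω (k : ℕ)).1) z, (q (Fin.last n)).2) ∂(τtil i) :=
    fun q => (setIntegral_eq τ τtil hfin hcyl i n q _ (hFmeas q)).symm
  rw [Finset.sum_congr rfl fun q _ => hstep q]
  rw [Finset.sum_congr rfl fun q _ =>
    (integral_indicator (measurableSet_Sq n q)).symm]
  have hintg : ∀ q ∈ (Finset.univ : Finset (Fin (n + 1) → V × V)),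
      Integrable (fun ω : ℕ → C(Y, Y) × (V × V) =>
        Set.indicator {ω : ℕ → C(Y, Y) × (V × V) | ∀ k : Fin (n + 1), (ω (k : ℕ)).2 = q k}
          (fun ω => φ (compsV (fun k : Fin (n + 1) => (ω (k : ℕ)).1) z, (q (Fin.last n)).2)) ω)
        (τtil i) := by
    intro q _
    apply Integrable.indicator _ (measurableSet_Sq n q)
    apply aux_integrable (τtil i) _ (fun ω => hC _)
    apply Measurable.aestronglyMeasurable
    exact ((hcont _).measurable).comp ((measurable_compsV z).comp (measurable_proj n))
  rw [← integral_finset_sum Finset.univ hintg]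
  apply integral_congr_ae
  apply Filter.Eventually.of_forall
  intro ω
  have hco : compsV (fun k : Fin (n + 1) => (ω (k : ℕ)).1) z
      = comps (fun k => (ω k).1) n z := by
    apply congrFun (comps_congr n fun k hk => ?_) z
    show (ω (min k n)).1 = (ω k).1
    rw [Nat.min_eq_left hk]
  have huniq : ∀ q : Fin (n + 1) → V × V,
      (ω ∈ {ω : ℕ → C(Y, Y) × (V × V) | ∀ k : Fin (n + 1), (ω (k : ℕ)).2 = q k})
        ↔ (fun k : Fin (n + 1) => (ω (k : ℕ)).2) = q := by
    intro q
    constructor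
    · intro h; funext k; exact h k
    · intro h k; rw [← h]
  have hind : ∀ q : Fin (n + 1) → V × V,
      Set.indicator {ω : ℕ → C(Y, Y) × (V × V) | ∀ k : Fin (n + 1), (ω (k : ℕ)).2 = q k}
        (fun ω => φ (compsV (fun k : Fin (n + 1) => (ω (k : ℕ)).1) z, (q (Fin.last n)).2)) ω
      = if (fun k : Fin (n + 1) => (ω (k : ℕ)).2) = q then
          φ (compsV (fun k : Fin (n + 1) => (ω (k : ℕ)).1) z, (q (Fin.last n)).2)
        else 0 := by
    intro q
    rw [Set.indicator_apply]
    exact if_congr (huniq q) rfl rfl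
  show (∑ q : Fin (n + 1) → V × V, Set.indicator _ _ ω) = _
  rw [Finset.sum_congr rfl fun q _ => hind q]
  rw [Finset.sum_ite_eq Finset.univ (fun k : Fin (n + 1) => (ω (k : ℕ)).2)
    (fun q => φ (compsV (fun k : Fin (n + 1) => (ω (k : ℕ)).1) z, (q (Fin.last n)).2))]
  rw [if_pos (Finset.mem_univ _)]
  rw [hco]
  rfl

end Aux

/-- If the non-autonomous Julia sets `J_ξ` avoid the point `y` for
`τ̃_i`-almost every sequence `ξ`, then for every continuous `φ` the family
`{M_τ^n φ}_{n ∈ ℕ}` is equicontinuous at `(y, i)`; equivalently, the iterated adjoints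
`n ↦ (M_τ*)^n (δ_{(y,i)})` form a family equicontinuous at `(y, i)`. -/
theorem stmt15 {Y V : Type*} [MetricSpace Y] [CompactSpace Y] [Fintype V]
    [TopologicalSpace V] [DiscreteTopology V]
    [MeasurableSpace C(Y, Y)] [BorelSpace C(Y, Y)]
    [MeasurableSpace V] [MeasurableSingletonClass V]
    (τ : V → V → Measure C(Y, Y))
    (hrow : ∀ i : V, ∑ j : V, τ i j Set.univ = 1)
    (τtil : V → Measure (ℕ → C(Y, Y) × (V × V)))
    (hprob : ∀ i, IsProbabilityMeasure (τtil i))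
    (hcyl : ∀ i : V, ∀ N : ℕ, ∀ A : Fin (N + 1) → Set C(Y, Y),
      (∀ k, MeasurableSet (A k)) → ∀ q : Fin (N + 1) → V × V,
      τtil i {ω | ∀ k : Fin (N + 1), (ω (k : ℕ)).1 ∈ A k ∧ (ω (k : ℕ)).2 = q k}
        = if (q 0).1 = i ∧ ∀ k : Fin N, (q k.castSucc).2 = (q k.succ).1 then
            ∏ k : Fin (N + 1), τ (q k).1 (q k).2 (A k)
          else 0)
    (y : Y) (i : V)
    (hnull : τtil i {ω : ℕ → C(Y, Y) × (V × V) |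
        y ∈ JuliaOf {g : Y → Y | ∃ n, g = comps (fun k => (ω k).1) n}} = 0) :
    ∀ φ : C(Y × V, ℂ),
      EquicontinuousAt (fun n : ℕ => fun p : Y × V => (Mtau τ)^[n] ⇑φ p) (y, i) := by
  letI : MeasurableSpace Y := borel Y
  haveI : BorelSpace Y := ⟨rfl⟩
  haveI hOV : OpensMeasurableSpace V := opensMeasurable_V
  haveI := hprob i
  have hfin : ∀ a b, IsFiniteMeasure (τ a b) := by
    intro a b
    constructor
    calc τ a b Set.univ ≤ ∑ c : V, τ a c Set.univ :=
          Finset.single_le_sum (f := fun c => τ a c Set.univ)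
            (fun c _ => zero_le) (Finset.mem_univ b)
      _ = 1 := hrow a
      _ < ⊤ := ENNReal.one_lt_top
  intro φ
  have hφm : Measurable ⇑φ := φ.continuous.measurable
  rw [Metric.equicontinuousAt_iff_right]
  intro ε hε
  obtain ⟨C, hC⟩ : ∃ C : ℝ, ∀ p : Y × V, ‖φ p‖ ≤ C := by
    obtain ⟨C, hC⟩ := isCompact_univ.exists_bound_of_continuousOn φ.continuous.continuousOn
    exact ⟨C, fun p => hC p (Set.mem_univ p)⟩
  have hC0 : 0 ≤ C := le_trans (norm_nonneg _) (hC (y, i))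
  have hunif : ∃ δ > 0, ∀ (j : V) (a b : Y), dist a b < δ →
      dist (φ (a, j)) (φ (b, j)) < ε / 3 := by
    have hbalance : ∀ j : V, ∃ δ > 0, ∀ a b : Y, dist a b < δ →
        dist (φ (a, j)) (φ (b, j)) < ε / 3 := by
      intro j
      have huc : UniformContinuous fun w : Y => φ (w, j) :=
        CompactSpace.uniformContinuous_of_continuous
          (φ.continuous.comp (continuous_id.prodMk continuous_const))
      exact Metric.uniformContinuous_iff.mp huc (ε / 3) (by positivity)
    choose δf hδf1 hδf2 using hbalance
    refine ⟨Finset.univ.inf' ⟨i, Finset.mem_univ i⟩ δf, ?_, ?_⟩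
    · exact (Finset.lt_inf'_iff _).mpr fun j _ => hδf1 j
    · intro j a b hab
      exact hδf2 j a b (lt_of_lt_of_le hab (Finset.inf'_le _ (Finset.mem_univ j)))
  obtain ⟨δ, hδpos, hδ⟩ := hunif
  obtain ⟨D, hDc, hDd⟩ := TopologicalSpace.exists_countable_dense Y
  set Em : ℕ → Set (ℕ → C(Y, Y) × (V × V)) := fun m =>
    ⋃ (n : ℕ), ⋃ w ∈ D ∩ Metric.closedBall y (1 / (m + 1)),
      {ω | δ / 2 < dist (comps (fun k => (ω k).1) n w) (comps (fun k => (ω k).1) n y)}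
    with hEm
  have hEmeas : ∀ m, MeasurableSet (Em m) := by
    intro m
    apply MeasurableSet.iUnion; intro n
    apply MeasurableSet.biUnion (hDc.mono Set.inter_subset_left)
    intro w _
    exact measurableSet_lt measurable_const
      ((measurable_compsOmega n w).dist (measurable_compsOmega n y))
  have hanti : Antitone Em := by
    intro m m' hmm'
    intro ω hω
    simp only [hEm, Set.mem_iUnion, Set.mem_setOf_eq] at hω ⊢
    obtain ⟨n, w, ⟨hwD, hwB⟩, h⟩ := hω
    refine ⟨n, w, ⟨hwD, ?_⟩, h⟩
    refine Metric.closedBall_subset_closedBall ?_ hwB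
    apply one_div_le_one_div_of_le
    · positivity
    · exact_mod_cast Nat.add_le_add_right hmm' 1
  have hsub : (⋂ m, Em m) ⊆ {ω : ℕ → C(Y, Y) × (V × V) |
      y ∈ JuliaOf {g : Y → Y | ∃ n, g = comps (fun k => (ω k).1) n}} := by
    intro ω hω
    simp only [Set.mem_iInter] at hω
    show ¬ ∃ U ∈ nhds y, ∀ z ∈ U, EquicontinuousAt
      (fun f : {g : Y → Y | ∃ n, g = comps (fun k => (ω k).1) n} => (f : Y → Y)) z
    rintro ⟨U, hU, hequi⟩
    have hEq := hequi y (mem_of_mem_nhds hU)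
    rw [Metric.equicontinuousAt_iff_right] at hEq
    have h2 := hEq (δ / 2) (by positivity)
    obtain ⟨r, hr, hball⟩ := Metric.eventually_nhds_iff_ball.mp h2
    obtain ⟨m, hm⟩ := exists_nat_one_div_lt hr
    have hmem := hω m
    simp only [hEm, Set.mem_iUnion, Set.mem_setOf_eq] at hmem
    obtain ⟨n, w, ⟨hwD, hwB⟩, hdist⟩ := hmem
    have hwU : w ∈ Metric.ball y r :=
      lt_of_le_of_lt (Metric.mem_closedBall.mp hwB) hm
    have hlt := hball w hwU ⟨comps (fun k => (ω k).1) n, ⟨n, rfl⟩⟩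
    rw [dist_comm] at hlt
    exact absurd hlt (not_lt.mpr (le_of_lt hdist))
  have hnullI : τtil i (⋂ m, Em m) = 0 :=
    le_antisymm (le_trans (measure_mono hsub) (le_of_eq hnull)) zero_le
  have htend := tendsto_measure_iInter_atTop (μ := τtil i)
    (fun m => (hEmeas m).nullMeasurableSet) hanti ⟨0, measure_ne_top _ _⟩
  rw [hnullI] at htend
  set η := ENNReal.ofReal (ε / 3 / (2 * C + 1)) with hη
  have hηpos : 0 < η := by
    rw [hη]
    apply ENNReal.ofReal_pos.mpr
    positivity
  obtain ⟨m₀, hm₀⟩ := (htend.eventually_lt_const hηpos).exists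
  have hr0pos : 0 < min δ (1 / ((m₀ : ℝ) + 1)) := by positivity
  filter_upwards [prod_mem_nhds (Metric.ball_mem_nhds y hr0pos)
    ((isOpen_discrete {i}).mem_nhds rfl)] with p hp
  obtain ⟨pz, pj⟩ := p
  obtain ⟨hp1, hp2⟩ := hp
  have hpj : i = pj := Eq.symm hp2
  subst hpj
  have hdzy : dist pz y < min δ (1 / ((m₀ : ℝ) + 1)) := Metric.mem_ball.mp hp1
  intro n
  match n with
  | 0 =>
      simp only [Function.iterate_zero, id]
      have := hδ i y pz (by rw [dist_comm]; exact lt_of_lt_of_le hdzy (min_le_left _ _))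
      calc dist (φ (y, i)) (φ (pz, i)) < ε / 3 := this
        _ < ε := by linarith
  | Nat.succ n' =>
      -- the two integrability facts
      have hmeas1 : Measurable fun ω : ℕ → C(Y, Y) × (V × V) =>
          φ (comps (fun k => (ω k).1) n' y, ((ω n').2).2) :=
        hφm.comp ((measurable_compsOmega n' y).prodMk
          ((measurable_pi_apply n').snd.snd))
      have hmeas2 : Measurable fun ω : ℕ → C(Y, Y) × (V × V) =>
          φ (comps (fun k => (ω k).1) n' pz, ((ω n').2).2) :=
        hφm.comp ((measurable_compsOmega n' pz).prodMk
          ((measurable_pi_apply n').snd.snd))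
      have hint1 : Integrable (fun ω : ℕ → C(Y, Y) × (V × V) =>
          φ (comps (fun k => (ω k).1) n' y, ((ω n').2).2)) (τtil i) :=
        aux_integrable _ hmeas1.aestronglyMeasurable (fun ω => hC _)
      have hint2 : Integrable (fun ω : ℕ → C(Y, Y) × (V × V) =>
          φ (comps (fun k => (ω k).1) n' pz, ((ω n').2).2)) (τtil i) :=
        aux_integrable _ hmeas2.aestronglyMeasurable (fun ω => hC _)
      rw [claimE τ τtil hfin hrow hcyl i inferInstance n' ⇑φ φ.continuous hC y,
        claimE τ τtil hfin hrow hcyl i inferInstance n' ⇑φ φ.continuous hC pz]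
      rw [dist_eq_norm, ← integral_sub hint1 hint2]
      set f : (ℕ → C(Y, Y) × (V × V)) → ℂ := fun ω =>
        φ (comps (fun k => (ω k).1) n' y, ((ω n').2).2)
          - φ (comps (fun k => (ω k).1) n' pz, ((ω n').2).2) with hf
      have hintf : Integrable f (τtil i) := hint1.sub hint2
      have hkey : ∀ ω ∈ (Em m₀)ᶜ, ‖f ω‖ ≤ ε / 3 := by
        intro ω hω
        have hnotin : ∀ (n : ℕ) (w : Y), w ∈ D → w ∈ Metric.closedBall y (1 / (m₀ + 1)) →
            dist (comps (fun k => (ω k).1) n w) (comps (fun k => (ω k).1) n y) ≤ δ / 2 := by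
          intro n w hwD hwB
          by_contra hcon
          apply hω
          simp only [hEm, Set.mem_iUnion, Set.mem_setOf_eq]
          exact ⟨n, w, ⟨hwD, hwB⟩, not_le.mp hcon⟩
        -- closed set argument
        have hK : IsClosed {w : Y |
            dist (comps (fun k => (ω k).1) n' w) (comps (fun k => (ω k).1) n' y) ≤ δ / 2} :=
          isClosed_le ((comps_cont _ n').dist continuous_const) continuous_const
        have hsubK : D ∩ Metric.ball y (1 / (m₀ + 1)) ⊆ {w : Y |
            dist (comps (fun k => (ω k).1) n' w) (comps (fun k => (ω k).1) n' y) ≤ δ / 2} :=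
          fun w hw => hnotin n' w hw.1 (Metric.ball_subset_closedBall hw.2)
        have hpzcl : pz ∈ closure (D ∩ Metric.ball y (1 / (m₀ + 1))) := by
          rw [mem_closure_iff]
          intro o ho hpo
          obtain ⟨x, hxD, hxo⟩ := hDd.exists_mem_open (ho.inter Metric.isOpen_ball)
            ⟨pz, hpo, lt_of_lt_of_le hdzy (min_le_right _ _)⟩
          exact ⟨x, hxo.1, hxD, hxo.2⟩
        have hpzK : dist (comps (fun k => (ω k).1) n' pz)
            (comps (fun k => (ω k).1) n' y) ≤ δ / 2 :=
          closure_minimal hsubK hK hpzcl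
        have hφdist := hδ ((ω n').2).2 (comps (fun k => (ω k).1) n' y)
          (comps (fun k => (ω k).1) n' pz)
          (by rw [dist_comm]; exact lt_of_le_of_lt hpzK (by linarith))
        rw [hf]
        calc ‖φ (comps (fun k => (ω k).1) n' y, ((ω n').2).2)
              - φ (comps (fun k => (ω k).1) n' pz, ((ω n').2).2)‖
            = dist (φ (comps (fun k => (ω k).1) n' y, ((ω n').2).2))
                (φ (comps (fun k => (ω k).1) n' pz, ((ω n').2).2)) := (dist_eq_norm _ _).symm
          _ ≤ ε / 3 := le_of_lt hφdist
      rw [← integral_add_compl (hEmeas m₀) hintf]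
      have hb1 : ‖∫ ω in Em m₀, f ω ∂τtil i‖ ≤ (2 * C) * (τtil i (Em m₀)).toReal := by
        apply norm_setIntegral_le_of_norm_le_const (measure_lt_top _ _)
        · intro ω _
          rw [hf]
          calc ‖_ - _‖ ≤ ‖_‖ + ‖_‖ := norm_sub_le _ _
            _ ≤ C + C := add_le_add (hC _) (hC _)
            _ = 2 * C := by ring
      have hb2 : ‖∫ ω in (Em m₀)ᶜ, f ω ∂τtil i‖ ≤ (ε / 3) * (τtil i (Em m₀)ᶜ).toReal := by
        apply norm_setIntegral_le_of_norm_le_const (measure_lt_top _ _) hkey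
      have ht : (τtil i (Em m₀)).toReal < ε / 3 / (2 * C + 1) := by
        rw [hη] at hm₀
        exact (ENNReal.lt_ofReal_iff_toReal_lt (measure_ne_top _ _)).mp hm₀
      have ht0 : 0 ≤ (τtil i (Em m₀)).toReal := ENNReal.toReal_nonneg
      have hs : (τtil i (Em m₀)ᶜ).toReal ≤ 1 := by
        have := prob_le_one (μ := τtil i) (s := (Em m₀)ᶜ)
        calc (τtil i (Em m₀)ᶜ).toReal ≤ (1 : ENNReal).toReal :=
              ENNReal.toReal_mono (by norm_num) this
          _ = 1 := by simp
      have hs0 : 0 ≤ (τtil i (Em m₀)ᶜ).toReal := ENNReal.toReal_nonneg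
      calc ‖(∫ ω in Em m₀, f ω ∂τtil i) + ∫ ω in (Em m₀)ᶜ, f ω ∂τtil i‖
          ≤ ‖∫ ω in Em m₀, f ω ∂τtil i‖ + ‖∫ ω in (Em m₀)ᶜ, f ω ∂τtil i‖ := norm_add_le _ _
        _ ≤ (2 * C) * (τtil i (Em m₀)).toReal + (ε / 3) * (τtil i (Em m₀)ᶜ).toReal :=
            add_le_add hb1 hb2
        _ < ε := by
            have h1 : 2 * C * (τtil i (Em m₀)).toReal ≤ 2 * C * (ε / 3 / (2 * C + 1)) :=
              mul_le_mul_of_nonneg_left ht.le (by linarith)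
            have hd : 2 * C / (2 * C + 1) ≤ 1 := (div_le_one (by linarith)).mpr (by linarith)
            have h2 : 2 * C * (ε / 3 / (2 * C + 1)) ≤ ε / 3 := by
              calc 2 * C * (ε / 3 / (2 * C + 1)) = (ε / 3) * (2 * C / (2 * C + 1)) := by ring
                _ ≤ (ε / 3) * 1 := mul_le_mul_of_nonneg_left hd (by linarith)
                _ = ε / 3 := mul_one _
            have h3 : (ε / 3) * (τtil i (Em m₀)ᶜ).toReal ≤ ε / 3 := by
              calc (ε / 3) * (τtil i (Em m₀)ᶜ).toReal ≤ (ε / 3) * 1 :=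
                    mul_le_mul_of_nonneg_left hs (by linarith)
                _ = ε / 3 := mul_one _
            linarith
end

section
/- Let S be a non-elementary irreducible rational GDMS on the Riemann sphere. Then for every vertex i, the exceptional set E_i(S) := {z ∈ Ĉ : #((H_i^i(S))⁻¹(z)) < 3} contains at most two points. -/
open OnePoint Polynomial

open Filter Topology

/-- The Riemann sphere, modelled as the one-point compactification of `ℂ`. -/
abbrev RSphere : Type := OnePoint ℂ

/-- The Riemann sphere is a compact Hausdorff space; equip it with the unique uniform
structure compatible with its topology (on a compact Hausdorff space the uniformity is
unique, and it is the one induced by the spherical metric). -/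
noncomputable instance : UniformSpace RSphere := uniformSpaceOfCompactR1

/-- `f : Ĉ → Ĉ` is a (non-constant) rational map: there are coprime polynomials
`p`, `q` with `q ≠ 0`, not both constant, such that `f` is the extension of
`z ↦ p(z)/q(z)` to the Riemann sphere. -/
def IsRatMap (f : RSphere → RSphere) : Prop :=
  ∃ p q : Polynomial ℂ, IsCoprime p q ∧ q ≠ 0 ∧ 1 ≤ max p.natDegree q.natDegree ∧
    (∀ z : ℂ, q.eval z ≠ 0 → f ↑z = ((p.eval z / q.eval z : ℂ) : RSphere)) ∧
    (∀ z : ℂ, q.eval z = 0 → f ↑z = ∞) ∧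
    (q.degree < p.degree → f ∞ = ∞) ∧
    (p.degree < q.degree → f ∞ = ((0 : ℂ) : RSphere)) ∧
    (p.degree = q.degree → f ∞ = ((p.leadingCoeff / q.leadingCoeff : ℂ) : RSphere))

/-- `f : Ĉ → Ĉ` is a polynomial map of degree at least `2`. -/
def IsPolyMap (f : RSphere → RSphere) : Prop :=
  ∃ p : Polynomial ℂ, 2 ≤ p.natDegree ∧
    (∀ z : ℂ, f ↑z = ((p.eval z : ℂ) : RSphere)) ∧ f ∞ = ∞

/-- `HWord ie te Γ i j h`: `h` is a composition `f_N ∘ ⋯ ∘ f_1` along an admissible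
word of edges from vertex `i` to vertex `j` with `f_n ∈ Γ e_n`, i.e. `h ∈ H_i^j(S)`. -/
inductive HWord {Y V E : Type*} (ie te : E → V) (Γ : E → Set (Y → Y)) :
    V → V → (Y → Y) → Prop
  | base {e : E} {f : Y → Y} (hf : f ∈ Γ e) : HWord ie te Γ (ie e) (te e) f
  | comp {i k : V} {h : Y → Y} {e : E} {f : Y → Y}
      (hh : HWord ie te Γ i k h) (hf : f ∈ Γ e) (hk : ie e = k) :
      HWord ie te Γ i (te e) (f ∘ h)

/-- `H_i^j(S)`. -/
def Hij {Y V E : Type*} (ie te : E → V) (Γ : E → Set (Y → Y)) (i j : V) :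
    Set (Y → Y) := {h | HWord ie te Γ i j h}

/-- The Julia set `J_i(S)` of the GDMS at vertex `i`. -/
def Julia {Y V E : Type*} [UniformSpace Y] (ie te : E → V) (Γ : E → Set (Y → Y))
    (i : V) : Set Y := JuliaOf {h | ∃ j, HWord ie te Γ i j h}

namespace St17

/-- Möbius transformation of the Riemann sphere. -/
noncomputable def moeb (a b c d : ℂ) : RSphere → RSphere := fun z =>
  OnePoint.rec (if c = 0 then ∞ else ((a / c : ℂ) : RSphere))
    (fun z => if c * z + d = 0 then ∞ else (((a * z + b) / (c * z + d) : ℂ) : RSphere)) z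

@[simp] lemma moeb_coe (a b c d : ℂ) (z : ℂ) :
    moeb a b c d ↑z = if c * z + d = 0 then ∞ else (((a * z + b) / (c * z + d) : ℂ) : RSphere) :=
  rfl

@[simp] lemma moeb_infty (a b c d : ℂ) :
    moeb a b c d ∞ = if c = 0 then ∞ else ((a / c : ℂ) : RSphere) := rfl

lemma moeb_comp (a b c d e f g h : ℂ) (hN : e * h - f * g ≠ 0) :
    moeb a b c d ∘ moeb e f g h =
      moeb (a * e + b * g) (a * f + b * h) (c * e + d * g) (c * f + d * h) := by
  funext z
  induction z using OnePoint.rec with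
  | infty =>
    simp only [Function.comp_apply, moeb_infty]
    by_cases hg : g = 0
    · have he : e ≠ 0 := fun he => hN (by rw [he, hg]; ring)
      subst hg
      rw [if_pos rfl]
      show moeb a b c d ∞ = _
      rw [moeb_infty]
      simp only [mul_zero, add_zero]
      by_cases hc : c = 0
      · simp [hc]
      · rw [if_neg hc, if_neg (mul_ne_zero hc he)]
        rw [mul_div_mul_right _ _ he]
    · rw [if_neg hg, moeb_coe]
      have key : c * (e / g) + d = (c * e + d * g) / g := by field_simp
      by_cases hce : c * e + d * g = 0
      · rw [if_pos (by rw [key, hce]; exact zero_div _), if_pos hce]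
      · rw [if_neg (by rw [key]; exact div_ne_zero hce hg), if_neg hce]
        congr 1
        rw [key]
        have key2 : a * (e / g) + b = (a * e + b * g) / g := by field_simp
        rw [key2]
        rw [div_div_div_cancel_right₀]
        exact hg
  | coe z =>
    simp only [Function.comp_apply, moeb_coe]
    by_cases hgz : g * z + h = 0
    · have hez : e * z + f ≠ 0 := by
        intro hez
        have hz : z * (e * h - f * g) = 0 := by linear_combination h * hez - f * hgz
        rcases mul_eq_zero.mp hz with hz | hd
        · subst hz
          simp only [mul_zero, zero_add] at hez hgz
          exact hN (by rw [hez, hgz]; ring)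
        · exact hN hd
      rw [if_pos hgz, moeb_infty]
      have key : (c * e + d * g) * z + (c * f + d * h) = c * (e * z + f) := by
        linear_combination d * hgz
      by_cases hc : c = 0
      · rw [if_pos hc, if_pos (by rw [key, hc]; ring)]
      · rw [if_neg hc, if_neg (by rw [key]; exact mul_ne_zero hc hez)]
        congr 1
        rw [key]
        have hnum : (a * e + b * g) * z + (a * f + b * h) = a * (e * z + f) := by
          linear_combination b * hgz
        rw [hnum, mul_comm a (e * z + f), mul_comm c (e * z + f),
          mul_div_mul_left _ _ hez]
    · rw [if_neg hgz, moeb_coe]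
      have key : c * ((e * z + f) / (g * z + h)) + d =
          ((c * e + d * g) * z + (c * f + d * h)) / (g * z + h) := by
        rw [mul_div_assoc', div_add' _ _ _ hgz]; ring
      by_cases hden : (c * e + d * g) * z + (c * f + d * h) = 0
      · rw [if_pos (by rw [key, hden]; exact zero_div _), if_pos hden]
      · rw [if_neg (by rw [key]; exact div_ne_zero hden hgz), if_neg hden]
        congr 1
        have key2 : a * ((e * z + f) / (g * z + h)) + b =
            ((a * e + b * g) * z + (a * f + b * h)) / (g * z + h) := by
          rw [mul_div_assoc', div_add' _ _ _ hgz]; ring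
        rw [key2, key, div_div_div_cancel_right₀]
        exact hgz

lemma moeb_diag (t : ℂ) (ht : t ≠ 0) : moeb t 0 0 t = id := by
  funext z
  induction z using OnePoint.rec with
  | infty => simp
  | coe z => simp [ht, mul_comm]

lemma moeb_left_inv (a b c d : ℂ) (hdet : a * d - b * c ≠ 0) :
    moeb d (-b) (-c) a ∘ moeb a b c d = id := by
  rw [moeb_comp d (-b) (-c) a a b c d hdet]
  have h1 : d * a + -b * c = a * d - b * c := by ring
  have h2 : d * b + -b * d = 0 := by ring
  have h3 : -c * a + a * c = 0 := by ring
  have h4 : -c * b + a * d = a * d - b * c := by ring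
  rw [h1, h2, h3, h4]
  exact moeb_diag _ hdet

lemma moeb_right_inv (a b c d : ℂ) (hdet : a * d - b * c ≠ 0) :
    moeb a b c d ∘ moeb d (-b) (-c) a = id := by
  have hdet' : d * a - (-b) * (-c) ≠ 0 := by
    intro h; exact hdet (by linear_combination h)
  rw [moeb_comp a b c d d (-b) (-c) a hdet']
  have h1 : a * d + b * -c = a * d - b * c := by ring
  have h2 : a * -b + b * a = 0 := by ring
  have h3 : c * d + d * -c = 0 := by ring
  have h4 : c * -b + d * a = a * d - b * c := by ring
  rw [h1, h2, h3, h4]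
  exact moeb_diag _ hdet

lemma moeb_bijective (a b c d : ℂ) (hdet : a * d - b * c ≠ 0) :
    Function.Bijective (moeb a b c d) := by
  constructor
  · exact Function.LeftInverse.injective
      (g := moeb d (-b) (-c) a) (congrFun (moeb_left_inv a b c d hdet))
  · exact Function.RightInverse.surjective
      (g := moeb d (-b) (-c) a) (congrFun (moeb_right_inv a b c d hdet))

lemma tendsto_cocompact_of_norm_atTop {α : Type*} {l : Filter α} {g : α → ℂ}
    (h : Tendsto (fun x => ‖g x‖) l atTop) : Tendsto g l (cocompact ℂ) := by
  rw [hasBasis_cocompact.tendsto_right_iff]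
  intro K hK
  obtain ⟨R, hR⟩ := isBounded_iff_forall_norm_le.mp hK.isBounded
  filter_upwards [h.eventually_gt_atTop R] with x hx
  simp only [Set.mem_compl_iff]
  exact fun hmem => absurd (hR _ hmem) (not_le.mpr hx)

lemma tendsto_coe_nhds_infty {α : Type*} {l : Filter α} {g : α → ℂ}
    (h : Tendsto g l (cocompact ℂ)) :
    Tendsto (fun x => ((g x : ℂ) : RSphere)) l (𝓝 ∞) := by
  rw [← coclosedCompact_eq_cocompact] at h
  exact OnePoint.tendsto_coe_infty.comp h

lemma tendsto_inv_cocompact : Tendsto (fun w : ℂ => w⁻¹) (cocompact ℂ) (𝓝 0) := by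
  rw [tendsto_zero_iff_norm_tendsto_zero]
  have := (tendsto_norm_cocompact_atTop (E := ℂ)).inv_tendsto_atTop
  simpa [Pi.inv_def] using this

lemma moeb_continuous (a b c d : ℂ) (hdet : a * d - b * c ≠ 0) :
    Continuous (moeb a b c d) := by
  rw [continuous_iff_continuousAt]
  intro z
  induction z using OnePoint.rec with
  | coe z =>
    rw [OnePoint.continuousAt_coe]
    by_cases hz : c * z + d = 0
    · have hc : c ≠ 0 := by
        intro hc0
        rw [hc0, zero_mul, zero_add] at hz
        exact hdet (by rw [hz, hc0]; ring)
      have hnum : a * z + b ≠ 0 := by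
        intro h0
        exact hdet (by linear_combination a * hz - c * h0)
      have hval : (moeb a b c d ∘ (↑)) z = ∞ := by
        simp only [Function.comp_apply, moeb_coe, if_pos hz]
      rw [ContinuousAt, hval, ← nhdsNE_sup_pure z, tendsto_sup]
      constructor
      · have hne : ∀ w : ℂ, w ≠ z → c * w + d ≠ 0 := by
          intro w hw hzero
          apply hw
          have hkey : c * (w - z) = 0 := by linear_combination hzero - hz
          rcases mul_eq_zero.mp hkey with h | h
          · exact absurd h hc
          · exact sub_eq_zero.mp h
        have hnum' : Tendsto (fun w : ℂ => ‖a * w + b‖) (𝓝[≠] z) (𝓝 ‖a * z + b‖) :=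
          (((continuous_const.mul continuous_id).add continuous_const).norm.tendsto z).mono_left
            nhdsWithin_le_nhds
        have hden' : Tendsto (fun w : ℂ => ‖c * w + d‖) (𝓝[≠] z) (𝓝 0) := by
          have : Tendsto (fun w : ℂ => ‖c * w + d‖) (𝓝 z) (𝓝 ‖c * z + d‖) :=
            ((continuous_const.mul continuous_id).add continuous_const).norm.tendsto z
          rw [hz, norm_zero] at this
          exact this.mono_left nhdsWithin_le_nhds
        have hfrac : Tendsto (fun w : ℂ => ‖c * w + d‖ / ‖a * w + b‖) (𝓝[≠] z) (𝓝[>] 0) := by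
          rw [tendsto_nhdsWithin_iff]
          constructor
          · have h := hden'.div hnum' (norm_ne_zero_iff.mpr hnum)
            rw [zero_div] at h
            exact h
          · have hev : ∀ᶠ w : ℂ in 𝓝[≠] z, a * w + b ≠ 0 := by
              apply eventually_nhdsWithin_of_eventually_nhds
              exact (((continuous_const.mul continuous_id).add
                continuous_const).continuousAt).eventually_ne hnum
            filter_upwards [hev, self_mem_nhdsWithin] with w hw hwz
            have : c * w + d ≠ 0 := hne w hwz
            exact Set.mem_setOf.mpr (div_pos (norm_pos_iff.mpr this) (norm_pos_iff.mpr hw))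
        have hblow : Tendsto (fun w : ℂ => ‖(a * w + b) / (c * w + d)‖) (𝓝[≠] z) atTop := by
          have := hfrac.inv_tendsto_nhdsGT_zero
          apply this.congr
          intro w
          rw [Pi.inv_apply, norm_div, inv_div]
        apply Tendsto.congr' ?_ (tendsto_coe_nhds_infty (tendsto_cocompact_of_norm_atTop hblow))
        · filter_upwards [self_mem_nhdsWithin] with w hw
          simp only [Function.comp_apply, moeb_coe, if_neg (hne w hw)]
      · rw [tendsto_pure_left]
        intro s hs
        rw [hval]
        exact mem_of_mem_nhds hs
    · have hca : ContinuousAt (fun w : ℂ => c * w + d) z :=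
        ((continuous_const.mul continuous_id).add continuous_const).continuousAt
      have hcb : ContinuousAt (fun w : ℂ => a * w + b) z :=
        ((continuous_const.mul continuous_id).add continuous_const).continuousAt
      have hcont : ContinuousAt (fun w : ℂ => (((a * w + b) / (c * w + d) : ℂ) : RSphere)) z :=
        (OnePoint.continuous_coe.tendsto _).comp (hcb.div hca hz)
      apply hcont.congr
      filter_upwards [hca.eventually_ne hz] with w hw
      simp only [Function.comp_apply, moeb_coe, if_neg hw]
  | infty =>
    rw [OnePoint.continuousAt_infty', coclosedCompact_eq_cocompact]
    by_cases hc : c = 0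
    · have hd : d ≠ 0 := fun h0 => hdet (by rw [hc, h0]; ring)
      have ha : a ≠ 0 := fun h0 => hdet (by rw [hc, h0]; ring)
      have hval : moeb a b c d ∞ = ∞ := by simp [hc]
      rw [hval]
      have key : Tendsto (fun w : ℂ => ‖(fun w : ℂ => (a * w + b) / d) w‖) (cocompact ℂ) atTop := by
        have hdeg : 0 < (C (a / d) * X + C (b / d)).degree := by
          rw [Polynomial.degree_linear (div_ne_zero ha hd)]; norm_num
        have := Polynomial.tendsto_norm_atTop (C (a / d) * X + C (b / d)) hdeg
          (tendsto_norm_cocompact_atTop (E := ℂ))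
        apply this.congr
        intro w
        simp only [eval_add, eval_mul, eval_C, eval_X]
        congr 1
        field_simp
      apply Tendsto.congr ?_ (tendsto_coe_nhds_infty (tendsto_cocompact_of_norm_atTop key))
      intro w
      have : c * w + d ≠ 0 := by rw [hc]; simpa using hd
      simp only [Function.comp_apply, moeb_coe, if_neg this]
      rw [hc]
      norm_num
    · have hval : moeb a b c d ∞ = ((a / c : ℂ) : RSphere) := by simp [hc]
      rw [hval]
      have hev : ∀ᶠ w : ℂ in cocompact ℂ, w ∉ ({-d / c, 0} : Set ℂ) :=
        mem_cocompact.mpr ⟨{-d / c, 0}, ((Set.finite_singleton (0:ℂ)).insert (-d / c)).isCompact,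
          fun x hx => hx⟩
      have hinner : Tendsto (fun w : ℂ => (a + b * w⁻¹) / (c + d * w⁻¹)) (cocompact ℂ)
          (𝓝 (a / c)) := by
        have h1 : Tendsto (fun w : ℂ => a + b * w⁻¹) (cocompact ℂ) (𝓝 (a + b * 0)) :=
          tendsto_const_nhds.add (tendsto_const_nhds.mul tendsto_inv_cocompact)
        have h2 : Tendsto (fun w : ℂ => c + d * w⁻¹) (cocompact ℂ) (𝓝 (c + d * 0)) :=
          tendsto_const_nhds.add (tendsto_const_nhds.mul tendsto_inv_cocompact)
        have h3 := h1.div h2 (by simpa using hc)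
        simp only [mul_zero, add_zero] at h3
        exact h3
      apply Tendsto.congr' ?_ ((OnePoint.continuous_coe.tendsto _).comp hinner)
      filter_upwards [hev] with w hw
      have hw0 : w ≠ 0 := fun h => hw (by simp [h])
      have hwz : c * w + d ≠ 0 := by
        intro h0
        apply hw
        have hwc : w = -d / c := by
          field_simp
          linear_combination h0
        simp [hwc]
      have hden2 : c + d * w⁻¹ ≠ 0 := by
        intro h0
        have hkey : (c + d * w⁻¹) * w = c * w + d := by field_simp
        exact hwz (by rw [← hkey, h0, zero_mul])
      simp only [Function.comp_apply, moeb_coe, if_neg hwz]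
      congr 1
      rw [div_eq_div_iff hden2 hwz]
      field_simp


lemma det_mul (a b c d e f g h : ℂ) :
    (a * e + b * g) * (c * f + d * h) - (a * f + b * h) * (c * e + d * g) =
      (a * d - b * c) * (e * h - f * g) := by ring

lemma roots_lemma {P : Polynomial ℂ} {n : ℕ} (hdeg : P.natDegree ≤ n) (t : Finset ℂ)
    (ht : ∀ x ∈ t, P.eval x = 0) (hcard : n < t.card) : P = 0 := by
  by_contra hP
  have h1 : t ⊆ P.roots.toFinset := by
    intro x hx
    exact Multiset.mem_toFinset.mpr ((Polynomial.mem_roots hP).mpr (ht x hx))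
  have h2 := Finset.card_le_card h1
  have h3 := P.roots.toFinset_card_le
  have h4 := Polynomial.card_roots' P
  omega

lemma moeb_eq_id {a b c d : ℂ} (hdet : a * d - b * c ≠ 0) {u v w : RSphere}
    (huv : u ≠ v) (huw : u ≠ w) (hvw : v ≠ w)
    (hu : moeb a b c d u = u) (hv : moeb a b c d v = v) (hw : moeb a b c d w = w) :
    moeb a b c d = id := by
  set P : Polynomial ℂ := C c * X ^ 2 + (C (d - a) * X - C b) with hP
  have hfix : ∀ z : RSphere, moeb a b c d z = z →
      (z = ∞ ∧ c = 0) ∨ (∃ t : ℂ, z = ↑t ∧ P.eval t = 0) := by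
    intro z hz
    induction z using OnePoint.rec with
    | infty =>
      rw [moeb_infty] at hz
      by_cases hc : c = 0
      · exact Or.inl ⟨rfl, hc⟩
      · rw [if_neg hc] at hz
        exact absurd hz (OnePoint.coe_ne_infty _)
    | coe t =>
      rw [moeb_coe] at hz
      by_cases hct : c * t + d = 0
      · rw [if_pos hct] at hz
        exact absurd hz (OnePoint.infty_ne_coe _)
      · rw [if_neg hct] at hz
        right
        refine ⟨t, rfl, ?_⟩
        have hzz : (a * t + b) / (c * t + d) = t := OnePoint.coe_eq_coe.mp hz
        have : a * t + b = t * (c * t + d) := by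
          rw [div_eq_iff hct] at hzz
          exact hzz
        simp only [hP, eval_add, eval_sub, eval_mul, eval_pow, eval_C, eval_X]
        linear_combination -this
  have hPz : P = 0 := by
    rcases hfix u hu with ⟨rfl, hc⟩ | ⟨t1, rfl, ht1⟩
    · -- u = ∞, c = 0; v w finite
      rcases hfix v hv with ⟨rfl, _⟩ | ⟨t2, rfl, ht2⟩
      · exact absurd rfl huv
      rcases hfix w hw with ⟨rfl, _⟩ | ⟨t3, rfl, ht3⟩
      · exact absurd rfl huw
      have hdeg : P.natDegree ≤ 1 := by
        rw [hP, hc, map_zero, zero_mul, zero_add]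
        exact le_trans (Polynomial.natDegree_sub_le _ _) (max_le
          (le_trans (Polynomial.natDegree_C_mul_le _ _) Polynomial.natDegree_X_le)
          (by simp))
      refine roots_lemma hdeg {t2, t3} ?_ ?_
      · intro x hx
        rcases Finset.mem_insert.mp hx with rfl | hx
        · exact ht2
        · rw [Finset.mem_singleton.mp hx]; exact ht3
      · rw [Finset.card_insert_of_notMem (by
          simp only [Finset.mem_singleton]
          exact fun h => hvw (by rw [h]))]
        simp
    · rcases hfix v hv with ⟨rfl, hc⟩ | ⟨t2, rfl, ht2⟩
      · -- v = ∞, c = 0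
        rcases hfix w hw with ⟨rfl, _⟩ | ⟨t3, rfl, ht3⟩
        · exact absurd rfl hvw
        have hdeg : P.natDegree ≤ 1 := by
          rw [hP, hc, map_zero, zero_mul, zero_add]
          exact le_trans (Polynomial.natDegree_sub_le _ _) (max_le
            (le_trans (Polynomial.natDegree_C_mul_le _ _) Polynomial.natDegree_X_le)
            (by simp))
        refine roots_lemma hdeg {t1, t3} ?_ ?_
        · intro x hx
          rcases Finset.mem_insert.mp hx with rfl | hx
          · exact ht1
          · rw [Finset.mem_singleton.mp hx]; exact ht3
        · rw [Finset.card_insert_of_notMem (by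
            simp only [Finset.mem_singleton]
            exact fun h => huw (by rw [h]))]
          simp
      · rcases hfix w hw with ⟨rfl, hc⟩ | ⟨t3, rfl, ht3⟩
        · -- w = ∞, c = 0
          have hdeg : P.natDegree ≤ 1 := by
            rw [hP, hc, map_zero, zero_mul, zero_add]
            exact le_trans (Polynomial.natDegree_sub_le _ _) (max_le
              (le_trans (Polynomial.natDegree_C_mul_le _ _) Polynomial.natDegree_X_le)
              (by simp))
          refine roots_lemma hdeg {t1, t2} ?_ ?_
          · intro x hx
            rcases Finset.mem_insert.mp hx with rfl | hx
            · exact ht1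
            · rw [Finset.mem_singleton.mp hx]; exact ht2
          · rw [Finset.card_insert_of_notMem (by
              simp only [Finset.mem_singleton]
              exact fun h => huv (by rw [h]))]
            simp
        · -- all finite
          have hdeg : P.natDegree ≤ 2 := by
            rw [hP]
            refine le_trans (Polynomial.natDegree_add_le _ _) (max_le ?_ ?_)
            · exact le_trans (Polynomial.natDegree_C_mul_le _ _)
                (by simp [Polynomial.natDegree_X_pow])
            · refine le_trans (Polynomial.natDegree_sub_le _ _) (max_le ?_ ?_)
              · exact le_trans (Polynomial.natDegree_C_mul_le _ _)
                  (le_trans Polynomial.natDegree_X_le one_le_two)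
              · simp
                -- natDegree (C b) = 0 ≤ 2
          have h12 : t1 ≠ t2 := fun h => huv (by rw [h])
          have h13 : t1 ≠ t3 := fun h => huw (by rw [h])
          have h23 : t2 ≠ t3 := fun h => hvw (by rw [h])
          refine roots_lemma hdeg {t1, t2, t3} ?_ ?_
          · intro x hx
            rcases Finset.mem_insert.mp hx with rfl | hx
            · exact ht1
            rcases Finset.mem_insert.mp hx with rfl | hx
            · exact ht2
            · rw [Finset.mem_singleton.mp hx]; exact ht3
          · rw [Finset.card_insert_of_notMem (by simp [h12, h13]),
              Finset.card_insert_of_notMem (by simp [h23])]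
            simp
  -- extract coefficients
  have hc0 : c = 0 := by
    have := congrArg (fun Q => Polynomial.coeff Q 2) hPz
    simpa [hP, Polynomial.coeff_C] using this
  have hb0 : b = 0 := by
    have := congrArg (fun Q => Polynomial.coeff Q 0) hPz
    simpa [hP, Polynomial.coeff_C] using this
  have had : d - a = 0 := by
    have := congrArg (fun Q => Polynomial.coeff Q 1) hPz
    simpa [hP, Polynomial.coeff_C] using this
  have hda : d = a := by linear_combination had
  have ha : a ≠ 0 := by
    intro h0
    exact hdet (by rw [hb0, hc0, hda, h0]; ring)
  rw [hb0, hc0, hda]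
  exact moeb_diag a ha

lemma moeb_ext {a b c d a' b' c' d' : ℂ} (h1 : a * d - b * c ≠ 0)
    (h2 : a' * d' - b' * c' ≠ 0) {u v w : RSphere}
    (huv : u ≠ v) (huw : u ≠ w) (hvw : v ≠ w)
    (hu : moeb a b c d u = moeb a' b' c' d' u)
    (hv : moeb a b c d v = moeb a' b' c' d' v)
    (hw : moeb a b c d w = moeb a' b' c' d' w) :
    moeb a b c d = moeb a' b' c' d' := by
  have h2' : d' * a' - (-b') * (-c') ≠ 0 := fun h => h2 (by linear_combination h)
  -- K := inverse of N
  have hcompM : moeb d' (-b') (-c') a' ∘ moeb a b c d =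
      moeb (d' * a + -b' * c) (d' * b + -b' * d) (-c' * a + a' * c) (-c' * b + a' * d) :=
    moeb_comp _ _ _ _ _ _ _ _ h1
  have hdetKM : (d' * a + -b' * c) * (-c' * b + a' * d) -
      (d' * b + -b' * d) * (-c' * a + a' * c) ≠ 0 := by
    have := det_mul d' (-b') (-c') a' a b c d
    rw [this]
    exact mul_ne_zero (fun h => h2 (by linear_combination h)) h1
  have hKN : moeb d' (-b') (-c') a' ∘ moeb a' b' c' d' = id := moeb_left_inv _ _ _ _ h2
  have hfix : ∀ z : RSphere, moeb a b c d z = moeb a' b' c' d' z →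
      (moeb d' (-b') (-c') a' ∘ moeb a b c d) z = z := by
    intro z hz
    simp only [Function.comp_apply, hz]
    exact congrFun hKN z
  have hid : moeb d' (-b') (-c') a' ∘ moeb a b c d = id := by
    rw [hcompM]
    rw [hcompM] at hfix
    exact moeb_eq_id hdetKM huv huw hvw (hfix u hu) (hfix v hv) (hfix w hw)
  have hinjK : Function.Injective (moeb d' (-b') (-c') a') :=
    (moeb_bijective _ _ _ _ h2').1
  funext z
  apply hinjK
  calc moeb d' (-b') (-c') a' (moeb a b c d z) = z := congrFun hid z
    _ = moeb d' (-b') (-c') a' (moeb a' b' c' d' z) := (congrFun hKN z).symm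

structure RatRep (f : RSphere → RSphere) where
  p : Polynomial ℂ
  q : Polynomial ℂ
  cop : IsCoprime p q
  qne : q ≠ 0
  dpos : 1 ≤ max p.natDegree q.natDegree
  evalq : ∀ z : ℂ, q.eval z ≠ 0 → f ↑z = ((p.eval z / q.eval z : ℂ) : RSphere)
  evalq0 : ∀ z : ℂ, q.eval z = 0 → f ↑z = ∞
  top1 : q.degree < p.degree → f ∞ = ∞
  top2 : p.degree < q.degree → f ∞ = ((0 : ℂ) : RSphere)
  top3 : p.degree = q.degree → f ∞ = ((p.leadingCoeff / q.leadingCoeff : ℂ) : RSphere)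

lemma isRatMap_rep {f : RSphere → RSphere} (hf : IsRatMap f) : Nonempty (RatRep f) := by
  obtain ⟨p, q, h1, h2, h3, h4, h5, h6, h7, h8⟩ := hf
  exact ⟨⟨p, q, h1, h2, h3, h4, h5, h6, h7, h8⟩⟩

namespace RatRep

variable {f : RSphere → RSphere} (R : RatRep f)

/-- The common degree bound. -/
def d : ℕ := max R.p.natDegree R.q.natDegree

lemma done : 1 ≤ R.d := R.dpos

lemma pne : R.p ≠ 0 := by
  intro h0
  have hu : IsUnit R.q := isCoprime_zero_left.mp (h0 ▸ R.cop)
  have hq0 : R.q.natDegree = 0 := Polynomial.natDegree_eq_zero_of_isUnit hu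
  have hp0 : R.p.natDegree = 0 := by rw [h0]; simp
  have := R.dpos
  rw [hp0, hq0] at this
  omega

lemma no_common_root : ∀ z : ℂ, R.q.eval z = 0 → R.p.eval z ≠ 0 := by
  intro z hq hp
  obtain ⟨u, v, huv⟩ := R.cop
  have := congrArg (Polynomial.eval z) huv
  simp [hp, hq] at this

/-- The polynomial whose finite roots are the finite points of the fiber over `w`. -/
noncomputable def r : RSphere → Polynomial ℂ := fun w =>
  OnePoint.rec R.q (fun w => R.p - C w * R.q) w

@[simp] lemma r_infty : R.r ∞ = R.q := rfl
@[simp] lemma r_coe (w : ℂ) : R.r ↑w = R.p - C w * R.q := rfl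

lemma mem_fiber (w : RSphere) (z : ℂ) : f ↑z = w ↔ (R.r w).eval z = 0 := by
  induction w using OnePoint.rec with
  | infty =>
    rw [r_infty]
    constructor
    · intro hz
      by_contra hq
      rw [R.evalq z hq] at hz
      exact OnePoint.coe_ne_infty _ hz
    · exact R.evalq0 z
  | coe w =>
    rw [r_coe]
    simp only [eval_sub, eval_mul, eval_C]
    constructor
    · intro hz
      have hq : R.q.eval z ≠ 0 := by
        intro hq0
        rw [R.evalq0 z hq0] at hz
        exact OnePoint.infty_ne_coe _ hz
      rw [R.evalq z hq] at hz
      have := OnePoint.coe_eq_coe.mp hz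
      rw [div_eq_iff hq] at this
      rw [this]; ring
    · intro hz
      have hpz : R.p.eval z = w * R.q.eval z := by linear_combination hz
      have hq : R.q.eval z ≠ 0 := by
        intro hq0
        exact R.no_common_root z hq0 (by rw [hpz, hq0, mul_zero])
      rw [R.evalq z hq, hpz, mul_div_assoc, div_self hq, mul_one]

lemma r_ne (w : RSphere) : R.r w ≠ 0 := by
  induction w using OnePoint.rec with
  | infty => exact R.qne
  | coe w =>
    rw [r_coe]
    intro h0
    have hpq : R.p = C w * R.q := by linear_combination h0
    have hu : IsUnit R.q := R.cop.isUnit_of_dvd' ⟨C w, by rw [hpq]; ring⟩ dvd_rfl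
    have hq0 : R.q.natDegree = 0 := Polynomial.natDegree_eq_zero_of_isUnit hu
    have hp0 : R.p.natDegree = 0 := by
      rw [hpq]
      exact le_antisymm (le_trans (Polynomial.natDegree_C_mul_le _ _) hq0.le) (Nat.zero_le _)
    have := R.dpos
    rw [hp0, hq0] at this
    omega

lemma natDegree_r_le (w : RSphere) : (R.r w).natDegree ≤ R.d := by
  induction w using OnePoint.rec with
  | infty => exact le_max_right _ _
  | coe w =>
    rw [r_coe]
    refine le_trans (Polynomial.natDegree_sub_le _ _) (max_le (le_max_left _ _) ?_)
    exact le_trans (Polynomial.natDegree_C_mul_le _ _) (le_max_right _ _)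

lemma natDegree_r (w : RSphere) (hw : f ∞ ≠ w) : (R.r w).natDegree = R.d := by
  have hpd := Polynomial.degree_eq_natDegree R.pne
  have hqd := Polynomial.degree_eq_natDegree R.qne
  induction w using OnePoint.rec with
  | infty =>
    rw [r_infty]
    have hle : R.p.natDegree ≤ R.q.natDegree := by
      by_contra hlt
      push_neg at hlt
      exact hw (R.top1 (by rw [hpd, hqd]; exact_mod_cast hlt))
    rw [d, max_eq_right hle]
  | coe w =>
    rcases lt_trichotomy R.p.degree R.q.degree with hlt | heq | hgt
    · have hw0 : w ≠ 0 := by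
        intro h0
        exact hw (by rw [R.top2 hlt, h0])
      have hnat : R.p.natDegree < R.q.natDegree := by
        rw [hpd, hqd] at hlt
        exact_mod_cast hlt
      have hCq : (C w * R.q).natDegree = R.q.natDegree := Polynomial.natDegree_C_mul hw0
      rw [r_coe, Polynomial.natDegree_sub_eq_right_of_natDegree_lt (by rw [hCq]; exact hnat),
        hCq, d, max_eq_right hnat.le]
    · have hnat : R.p.natDegree = R.q.natDegree := by
        rw [hpd, hqd] at heq
        exact_mod_cast heq
      have hlc : R.p.leadingCoeff ≠ w * R.q.leadingCoeff := by
        intro hlc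
        apply hw
        rw [R.top3 heq, hlc, mul_div_assoc, div_self (Polynomial.leadingCoeff_ne_zero.mpr R.qne),
          mul_one]
      have hcoeff : (R.r ↑w).coeff R.q.natDegree ≠ 0 := by
        rw [r_coe]
        simp only [Polynomial.coeff_sub, Polynomial.coeff_C_mul]
        rw [← hnat, Polynomial.coeff_natDegree, hnat, Polynomial.coeff_natDegree]
        exact sub_ne_zero.mpr hlc
      have hd : R.d = R.q.natDegree := by rw [d, hnat, max_self]
      rw [hd]
      exact le_antisymm (hd ▸ R.natDegree_r_le ↑w) (Polynomial.le_natDegree_of_ne_zero hcoeff)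
    · have hnat : R.q.natDegree < R.p.natDegree := by
        rw [hpd, hqd] at hgt
        exact_mod_cast hgt
      have hCq : (C w * R.q).natDegree ≤ R.q.natDegree := Polynomial.natDegree_C_mul_le _ _
      rw [r_coe, Polynomial.natDegree_sub_eq_left_of_natDegree_lt (lt_of_le_of_lt hCq hnat),
        d, max_eq_left hnat.le]

include R in
lemma surj : Function.Surjective f := by
  intro w
  by_cases hroot : ∃ z : ℂ, (R.r w).eval z = 0
  · obtain ⟨z, hz⟩ := hroot
    exact ⟨↑z, (R.mem_fiber w z).mpr hz⟩
  · refine ⟨∞, ?_⟩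
    by_contra hne
    have hd := R.natDegree_r w hne
    have hpos : 0 < (R.r w).degree := by
      rw [Polynomial.degree_eq_natDegree (R.r_ne w), hd]
      exact_mod_cast lt_of_lt_of_le one_pos R.done
    obtain ⟨z, hz⟩ := Complex.exists_root hpos
    exact hroot ⟨z, hz⟩

lemma normal_coe {w : RSphere} {x : ℂ} (hfib : f ⁻¹' {w} = {(x : RSphere)}) :
    R.r w = C ((R.r w).leadingCoeff) * (X - C x) ^ R.d ∧ (R.r w).leadingCoeff ≠ 0 := by
  have hxw : f ↑x = w := by
    have : (x : RSphere) ∈ f ⁻¹' {w} := by rw [hfib]; exact rfl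
    simpa using this
  have hwinf : f ∞ ≠ w := by
    intro h
    have : (∞ : RSphere) ∈ f ⁻¹' {w} := by simpa using h
    rw [hfib] at this
    exact OnePoint.infty_ne_coe x (by simpa using this)
  have hd := R.natDegree_r w hwinf
  have hsplit : (R.r w).Splits := IsAlgClosed.splits _
  have hcard : Multiset.card (R.r w).roots = R.d := by
    have := hsplit.natDegree_eq_card_roots.symm
    rwa [hd] at this
  have hroots : (R.r w).roots = Multiset.replicate R.d x := by
    refine Multiset.eq_replicate.mpr ⟨hcard, fun b hb => ?_⟩
    have hb' : (R.r w).eval b = 0 := by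
      have := Polynomial.mem_roots (R.r_ne w) |>.mp hb
      exact this
    have : f ↑b = w := (R.mem_fiber w b).mpr hb'
    have : (b : RSphere) ∈ f ⁻¹' {w} := by simpa using this
    rw [hfib] at this
    exact OnePoint.coe_eq_coe.mp (by simpa using this)
  constructor
  · have := hsplit.eq_prod_roots
    rw [hroots, Multiset.map_replicate, Multiset.prod_replicate] at this
    exact this
  · exact Polynomial.leadingCoeff_ne_zero.mpr (R.r_ne w)

lemma normal_infty {w : RSphere} (hfib : f ⁻¹' {w} = {(∞ : RSphere)}) :
    R.r w = C ((R.r w).leadingCoeff) ∧ (R.r w).leadingCoeff ≠ 0 := by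
  have hnoroot : ∀ z : ℂ, (R.r w).eval z ≠ 0 := by
    intro z hz
    have : f ↑z = w := (R.mem_fiber w z).mpr hz
    have : (z : RSphere) ∈ f ⁻¹' {w} := by simpa using this
    rw [hfib] at this
    exact OnePoint.coe_ne_infty z (by simpa using this)
  have hsplit : (R.r w).Splits := IsAlgClosed.splits _
  have hroots : (R.r w).roots = 0 := by
    rw [Multiset.eq_zero_iff_forall_notMem]
    intro b hb
    exact hnoroot b ((Polynomial.mem_roots (R.r_ne w)).mp hb)
  have hd0 : (R.r w).natDegree = 0 := by
    have := hsplit.natDegree_eq_card_roots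
    rwa [hroots, Multiset.card_zero] at this
  constructor
  · conv_lhs => rw [Polynomial.eq_C_of_natDegree_eq_zero hd0]
    congr 1
    rw [Polynomial.leadingCoeff, hd0]
  · exact Polynomial.leadingCoeff_ne_zero.mpr (R.r_ne w)

/-- The Wronskian `p q' - p' q`. -/
noncomputable def Wr : Polynomial ℂ := R.p * R.q.derivative - R.p.derivative * R.q

lemma cross {w w' : RSphere} (hww : w ≠ w') : ∃ μ : ℂ, μ ≠ 0 ∧
    R.r w * (R.r w').derivative - (R.r w).derivative * R.r w' = C μ * R.Wr := by
  induction w using OnePoint.rec with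
  | infty =>
    induction w' using OnePoint.rec with
    | infty => exact absurd rfl hww
    | coe b =>
      refine ⟨-1, by norm_num, ?_⟩
      simp only [r_infty, r_coe, Wr, derivative_sub, Polynomial.derivative_C_mul, map_neg,
        map_one]
      ring
  | coe a =>
    induction w' using OnePoint.rec with
    | infty =>
      refine ⟨1, one_ne_zero, ?_⟩
      simp only [r_infty, r_coe, Wr, derivative_sub, Polynomial.derivative_C_mul, map_one]
      ring
    | coe b =>
      have hab : a ≠ b := fun h => hww (by rw [h])
      refine ⟨a - b, sub_ne_zero.mpr hab, ?_⟩
      simp only [r_coe, Wr, derivative_sub, Polynomial.derivative_C_mul, map_sub]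
      ring


include R in
lemma auxA (hd2 : 2 ≤ R.d) {u v w : RSphere} (huv : u ≠ v) (huw : u ≠ w) (hvw : v ≠ w)
    {x y z : ℂ}
    (hu : f ⁻¹' {u} = {(x : RSphere)}) (hv : f ⁻¹' {v} = {(y : RSphere)})
    (hw : f ⁻¹' {w} = {(z : RSphere)}) : False := by
  obtain ⟨m, hm⟩ : ∃ m : ℕ, R.d = m + 1 := ⟨R.d - 1, by omega⟩
  have hm1 : 1 ≤ m := by omega
  -- the fiber points are distinct
  have hfx : f ↑x = u := by
    have : (x : RSphere) ∈ f ⁻¹' {u} := by rw [hu]; exact rfl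
    simpa using this
  have hfy : f ↑y = v := by
    have : (y : RSphere) ∈ f ⁻¹' {v} := by rw [hv]; exact rfl
    simpa using this
  have hfz : f ↑z = w := by
    have : (z : RSphere) ∈ f ⁻¹' {w} := by rw [hw]; exact rfl
    simpa using this
  have hxy : x ≠ y := fun h => huv (by rw [← hfx, ← hfy, h])
  have hxz : x ≠ z := fun h => huw (by rw [← hfx, ← hfz, h])
  have hyz : y ≠ z := fun h => hvw (by rw [← hfy, ← hfz, h])
  obtain ⟨e1, c1ne⟩ := R.normal_coe hu
  obtain ⟨e2, c2ne⟩ := R.normal_coe hv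
  obtain ⟨e3, c3ne⟩ := R.normal_coe hw
  set c1 := (R.r u).leadingCoeff
  set c2 := (R.r v).leadingCoeff
  set c3 := (R.r w).leadingCoeff
  obtain ⟨μ, hμ, hT12⟩ := R.cross huv
  obtain ⟨μ', hμ', hT13⟩ := R.cross huw
  have hkey : C μ' * (R.r u * (R.r v).derivative - (R.r u).derivative * R.r v) =
      C μ * (R.r u * (R.r w).derivative - (R.r u).derivative * R.r w) := by
    rw [hT12, hT13]; ring
  rw [e1, e2, e3] at hkey
  have hkey2 := congrArg (Polynomial.eval z) hkey
  simp only [Polynomial.derivative_C_mul, Polynomial.derivative_X_sub_C_pow, eval_mul, eval_sub,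
    eval_pow, eval_C, eval_X] at hkey2
  rw [hm] at hkey2
  simp only [Nat.add_sub_cancel, sub_self] at hkey2
  rw [zero_pow (by omega : m ≠ 0)] at hkey2
  have hzpow : (0 : ℂ) ^ (m + 1) = 0 := by
    rw [zero_pow (by omega : m + 1 ≠ 0)]
  rw [hzpow] at hkey2
  have hfinal : μ' * c1 * c2 * ((m : ℂ) + 1) * (z - x) ^ m * (z - y) ^ m * ((z - x) - (z - y))
      = 0 := by
    push_cast at hkey2 ⊢
    linear_combination hkey2
  have h1 : (z - x) - (z - y) = y - x := by ring
  rw [h1] at hfinal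
  have : ((m : ℂ) + 1) ≠ 0 := by
    exact_mod_cast not_false
  have hne := mul_ne_zero (mul_ne_zero (mul_ne_zero (mul_ne_zero (mul_ne_zero
    (mul_ne_zero hμ' c1ne) c2ne) this) (pow_ne_zero m (sub_ne_zero.mpr (Ne.symm hxz))))
    (pow_ne_zero m (sub_ne_zero.mpr (Ne.symm hyz)))) (sub_ne_zero.mpr (Ne.symm hxy))
  exact hne hfinal

include R in
lemma auxB (hd2 : 2 ≤ R.d) {u v w : RSphere} (huv : u ≠ v) (huw : u ≠ w) (hvw : v ≠ w)
    {y z : ℂ}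
    (hu : f ⁻¹' {u} = {(∞ : RSphere)}) (hv : f ⁻¹' {v} = {(y : RSphere)})
    (hw : f ⁻¹' {w} = {(z : RSphere)}) : False := by
  obtain ⟨m, hm⟩ : ∃ m : ℕ, R.d = m + 1 := ⟨R.d - 1, by omega⟩
  have hm1 : 1 ≤ m := by omega
  have hfy : f ↑y = v := by
    have : (y : RSphere) ∈ f ⁻¹' {v} := by rw [hv]; exact rfl
    simpa using this
  have hfz : f ↑z = w := by
    have : (z : RSphere) ∈ f ⁻¹' {w} := by rw [hw]; exact rfl
    simpa using this
  have hyz : y ≠ z := fun h => hvw (by rw [← hfy, ← hfz, h])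
  obtain ⟨e1, c1ne⟩ := R.normal_infty hu
  obtain ⟨e2, c2ne⟩ := R.normal_coe hv
  obtain ⟨e3, c3ne⟩ := R.normal_coe hw
  set c1 := (R.r u).leadingCoeff
  set c2 := (R.r v).leadingCoeff
  set c3 := (R.r w).leadingCoeff
  obtain ⟨μ, hμ, hT12⟩ := R.cross huv
  obtain ⟨μ', hμ', hT13⟩ := R.cross huw
  have hkey : C μ' * (R.r u * (R.r v).derivative - (R.r u).derivative * R.r v) =
      C μ * (R.r u * (R.r w).derivative - (R.r u).derivative * R.r w) := by
    rw [hT12, hT13]; ring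
  rw [e1, e2, e3] at hkey
  have hkey2 := congrArg (Polynomial.eval z) hkey
  simp only [Polynomial.derivative_C_mul, Polynomial.derivative_X_sub_C_pow,
    Polynomial.derivative_C, eval_mul, eval_sub, eval_pow, eval_C, eval_X, eval_zero, zero_mul,
    mul_zero, sub_zero, sub_self] at hkey2
  rw [hm] at hkey2
  simp only [Nat.add_sub_cancel] at hkey2
  rw [zero_pow (by omega : m ≠ 0)] at hkey2
  have hfinal : μ' * c1 * c2 * ((m : ℂ) + 1) * (z - y) ^ m = 0 := by
    push_cast at hkey2 ⊢
    linear_combination hkey2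
  have hmne : ((m : ℂ) + 1) ≠ 0 := by
    exact_mod_cast not_false
  have hne := mul_ne_zero (mul_ne_zero (mul_ne_zero (mul_ne_zero hμ' c1ne) c2ne) hmne)
    (pow_ne_zero m (sub_ne_zero.mpr (Ne.symm hyz)))
  exact hne hfinal

include R in
lemma small_of_three {w1 w2 w3 : RSphere} (h12 : w1 ≠ w2) (h13 : w1 ≠ w3) (h23 : w2 ≠ w3)
    (s1 : (f ⁻¹' {w1}).Subsingleton) (s2 : (f ⁻¹' {w2}).Subsingleton)
    (s3 : (f ⁻¹' {w3}).Subsingleton) :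
    max R.p.natDegree R.q.natDegree ≤ 1 := by
  by_contra hbig
  push_neg at hbig
  have hd2 : 2 ≤ R.d := hbig
  have hsing : ∀ w : RSphere, (f ⁻¹' {w}).Subsingleton → ∃ x, f ⁻¹' {w} = {x} := by
    intro w hs
    obtain ⟨zz, hzz⟩ := R.surj w
    exact ⟨zz, Set.eq_singleton_iff_unique_mem.mpr ⟨by simpa using hzz,
      fun yy hyy => hs hyy (by simpa using hzz)⟩⟩
  obtain ⟨x1, hx1⟩ := hsing w1 s1
  obtain ⟨x2, hx2⟩ := hsing w2 s2
  obtain ⟨x3, hx3⟩ := hsing w3 s3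
  induction x1 using OnePoint.rec with
  | infty =>
    induction x2 using OnePoint.rec with
    | infty =>
      -- w1 = w2 since both fibers contain only ∞... fibers: f ∞ ∈ both
      have h1 : f ∞ = w1 := by
        have : (∞ : RSphere) ∈ f ⁻¹' {w1} := by rw [hx1]; exact rfl
        simpa using this
      have h2 : f ∞ = w2 := by
        have : (∞ : RSphere) ∈ f ⁻¹' {w2} := by rw [hx2]; exact rfl
        simpa using this
      exact h12 (h1 ▸ h2)
    | coe y =>
      induction x3 using OnePoint.rec with
      | infty =>
        have h1 : f ∞ = w1 := by
          have : (∞ : RSphere) ∈ f ⁻¹' {w1} := by rw [hx1]; exact rfl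
          simpa using this
        have h2 : f ∞ = w3 := by
          have : (∞ : RSphere) ∈ f ⁻¹' {w3} := by rw [hx3]; exact rfl
          simpa using this
        exact h13 (h1 ▸ h2)
      | coe z => exact R.auxB hd2 h12 h13 h23 hx1 hx2 hx3
  | coe x =>
    induction x2 using OnePoint.rec with
    | infty =>
      induction x3 using OnePoint.rec with
      | infty =>
        have h1 : f ∞ = w2 := by
          have : (∞ : RSphere) ∈ f ⁻¹' {w2} := by rw [hx2]; exact rfl
          simpa using this
        have h2 : f ∞ = w3 := by
          have : (∞ : RSphere) ∈ f ⁻¹' {w3} := by rw [hx3]; exact rfl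
          simpa using this
        exact h23 (h1 ▸ h2)
      | coe z => exact R.auxB hd2 h12.symm h23 h13 hx2 hx1 hx3
    | coe y =>
      induction x3 using OnePoint.rec with
      | infty => exact R.auxB hd2 h13.symm h23.symm h12 hx3 hx1 hx2
      | coe z => exact R.auxA hd2 h12 h13 h23 hx1 hx2 hx3

end RatRep



lemma RatRep.exists_moeb {f : RSphere → RSphere} (R : RatRep f)
    (hsmall : max R.p.natDegree R.q.natDegree ≤ 1) :
    ∃ a b c d : ℂ, a * d - b * c ≠ 0 ∧ f = moeb a b c d := by
  set a := R.p.coeff 1 with ha_def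
  set b := R.p.coeff 0 with hb_def
  set c := R.q.coeff 1 with hc_def
  set dd := R.q.coeff 0 with hdd_def
  have hp : R.p = C a * X + C b :=
    Polynomial.eq_X_add_C_of_natDegree_le_one (le_trans (le_max_left _ _) hsmall)
  have hq : R.q = C c * X + C dd :=
    Polynomial.eq_X_add_C_of_natDegree_le_one (le_trans (le_max_right _ _) hsmall)
  have hac : a ≠ 0 ∨ c ≠ 0 := by
    by_contra hboth
    push_neg at hboth
    obtain ⟨ha0, hc0⟩ := hboth
    have h1 : R.p.natDegree = 0 := by rw [hp, ha0]; simp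
    have h2 : R.q.natDegree = 0 := by rw [hq, hc0]; simp
    have := R.dpos
    rw [h1, h2] at this
    omega
  have hdet : a * dd - b * c ≠ 0 := by
    intro h0
    by_cases hc : c = 0
    · have hdd : dd ≠ 0 := by
        intro h
        apply R.qne
        rw [hq, hc, h]
        simp
      have ha0 : a = 0 := by
        have hadd : a * dd = 0 := by linear_combination h0 + b * hc
        exact (mul_eq_zero.mp hadd).resolve_right hdd
      exact (hac.resolve_left (not_not_intro ha0)) hc
    · have hqp : R.p = C (a / c) * R.q := by
        rw [hp, hq, mul_add, ← mul_assoc, ← Polynomial.C_mul, ← Polynomial.C_mul,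
          div_mul_cancel₀ a hc]
        congr 2
        field_simp
        linear_combination -h0
      have hu : IsUnit R.q := R.cop.isUnit_of_dvd' ⟨C (a / c), by rw [hqp]; ring⟩ dvd_rfl
      have h1 : R.q.natDegree = 0 := Polynomial.natDegree_eq_zero_of_isUnit hu
      have h2 : 1 ≤ R.q.natDegree := Polynomial.le_natDegree_of_ne_zero hc
      omega
  refine ⟨a, b, c, dd, hdet, ?_⟩
  funext z
  induction z using OnePoint.rec with
  | coe z =>
    have hqe : R.q.eval z = c * z + dd := by rw [hq]; simp
    have hpe : R.p.eval z = a * z + b := by rw [hp]; simp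
    by_cases hz : c * z + dd = 0
    · rw [R.evalq0 z (by rw [hqe]; exact hz), moeb_coe, if_pos hz]
    · rw [R.evalq z (by rw [hqe]; exact hz), moeb_coe, if_neg hz, hpe, hqe]
  | infty =>
    by_cases hc : c = 0
    · have ha : a ≠ 0 := hac.resolve_right (not_not_intro hc)
      have hdd : dd ≠ 0 := by
        intro h
        apply R.qne
        rw [hq, hc, h]
        simp
      have hdq : R.q.degree < R.p.degree := by
        rw [hp, hq, hc, Polynomial.degree_linear ha]
        simp only [map_zero, zero_mul, zero_add]
        rw [Polynomial.degree_C hdd]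
        norm_num
      rw [R.top1 hdq, moeb_infty, if_pos hc]
    · rw [moeb_infty, if_neg hc]
      by_cases ha : a = 0
      · have hdpq : R.p.degree < R.q.degree := by
          rw [hp, hq, ha, Polynomial.degree_linear hc]
          simp only [map_zero, zero_mul, zero_add]
          exact lt_of_le_of_lt Polynomial.degree_C_le (by norm_num)
        rw [R.top2 hdpq, ha, zero_div]
      · have hdeq : R.p.degree = R.q.degree := by
          rw [hp, hq, Polynomial.degree_linear ha, Polynomial.degree_linear hc]
        rw [R.top3 hdeq, hp, hq, Polynomial.leadingCoeff_linear ha,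
          Polynomial.leadingCoeff_linear hc]

lemma hword_trans {Y V E : Type*} {ie te : E → V} {Γ : E → Set (Y → Y)} {i k j : V}
    {h1 h2 : Y → Y} (H1 : HWord ie te Γ i k h1) (H2 : HWord ie te Γ k j h2) :
    HWord ie te Γ i j (h2 ∘ h1) := by
  induction H2 with
  | base hf => exact HWord.comp H1 hf rfl
  | comp hh hf hk ih =>
    have h2 := HWord.comp (ih H1) hf hk
    simpa [Function.comp_assoc] using h2

lemma hword_surjective {V E : Type*} {ie te : E → V} {Γ : E → Set (RSphere → RSphere)}
    (hrat : ∀ e, ∀ g ∈ Γ e, IsRatMap g) {i j : V} {h : RSphere → RSphere}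
    (H : HWord ie te Γ i j h) : Function.Surjective h := by
  induction H with
  | base hf =>
    obtain ⟨R⟩ := isRatMap_rep (hrat _ _ hf)
    exact R.surj
  | comp hh hf hk ih =>
    obtain ⟨R⟩ := isRatMap_rep (hrat _ _ hf)
    exact R.surj.comp ih

lemma hword_moeb {V E : Type*} {ie te : E → V} {Γ : E → Set (RSphere → RSphere)}
    (hmo : ∀ e, ∀ g ∈ Γ e, ∃ a b c d : ℂ, a * d - b * c ≠ 0 ∧ g = moeb a b c d)
    {i j : V} {h : RSphere → RSphere} (H : HWord ie te Γ i j h) :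
    ∃ a b c d : ℂ, a * d - b * c ≠ 0 ∧ h = moeb a b c d := by
  induction H with
  | base hf => exact hmo _ _ hf
  | comp hh hf hk ih =>
    obtain ⟨a, b, c, d, hdet, rfl⟩ := hmo _ _ hf
    obtain ⟨a', b', c', d', hdet', rfl⟩ := ih
    refine ⟨a * a' + b * c', a * b' + b * d', c * a' + d * c', c * b' + d * d', ?_,
      moeb_comp a b c d a' b' c' d' hdet'⟩
    rw [det_mul]
    exact mul_ne_zero hdet hdet'

lemma equicontinuousAt_of_finite {ι : Type*} [Finite ι] {X : Type*} [TopologicalSpace X]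
    {Y : Type*} [UniformSpace Y] {F : ι → X → Y} (hc : ∀ i, Continuous (F i)) (x : X) :
    EquicontinuousAt F x := by
  intro U hU
  rw [Filter.eventually_all]
  intro i
  have h1 : UniformSpace.ball (F i x) U ∈ nhds (F i x) := UniformSpace.ball_mem_nhds _ hU
  have h2 := (hc i).continuousAt.preimage_mem_nhds h1
  filter_upwards [h2] with x' hx'
  exact hx'

lemma fiber_sub {A : Set RSphere} (hA : A.Finite) {h : RSphere → RSphere}
    (hsurj : Function.Surjective h) (hinv : h ⁻¹' A ⊆ A) {a : RSphere} (ha : a ∈ A) :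
    (h ⁻¹' {a}).Subsingleton := by
  classical
  intro u hu v hv
  have hu' : h u = a := hu
  have hv' : h v = a := hv
  have hchoice : ∀ x : RSphere, ∃ y, h y = x := hsurj
  set σ : RSphere → RSphere := fun x => if x = a then u else Classical.choose (hchoice x)
    with hσ
  have hσ_spec : ∀ x, h (σ x) = x := by
    intro x
    by_cases hx : x = a
    · rw [hσ]
      simp only [if_pos hx, hx]
      exact hu'
    · rw [hσ]
      simp only [if_neg hx]
      exact Classical.choose_spec (hchoice x)
  have hmap : Set.MapsTo σ A A := by
    intro x hx
    exact hinv (by rw [Set.mem_preimage, hσ_spec x]; exact hx)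
  have hinj : Set.InjOn σ A := by
    intro x hx y hy hxy
    rw [← hσ_spec x, ← hσ_spec y, hxy]
  have hsurjOn : Set.SurjOn σ A A := ((hA.injOn_iff_bijOn_of_mapsTo hmap).mp hinj).surjOn
  have hvA : v ∈ A := hinv (by rw [Set.mem_preimage, hv']; exact ha)
  obtain ⟨x, hxA, hxv⟩ := hsurjOn hvA
  have hx1 : h v = x := by rw [← hxv, hσ_spec]
  have hx_eq : x = a := hx1.symm.trans hv'
  rw [hx_eq] at hxv
  have hσa : σ a = u := by rw [hσ]; simp
  exact hσa.symm.trans hxv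

end St17

/-- For a non-elementary irreducible rational GDMS on the Riemann
sphere, the exceptional set `E_i(S) = {z : #((H_i^i(S))⁻¹(z)) < 3}` at each vertex `i`
contains at most two points. -/
theorem stmt17 {V E : Type*} [Fintype V] [Fintype E]
    (ie te : E → V) (Γ : E → Set (RSphere → RSphere))
    (hne : ∀ e, (Γ e).Nonempty)
    (hrat : ∀ e, ∀ f ∈ Γ e, IsRatMap f)
    (hirr : ∀ i j : V, (Hij ie te Γ i j).Nonempty)
    (hnonel : ∀ i : V, 3 ≤ (Julia ie te Γ i).encard) :
    ∀ i : V,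
      ({z : RSphere | (⋃ h ∈ Hij ie te Γ i i, h ⁻¹' {z}).encard < 3}).encard ≤ 2 := by
  intro i
  by_contra hcard
  push_neg at hcard
  have h3 : (3 : ℕ∞) ≤
      ({z : RSphere | (⋃ h ∈ Hij ie te Γ i i, h ⁻¹' {z}).encard < 3}).encard := by
    have := Order.add_one_le_of_lt hcard
    norm_num at this ⊢
    exact this
  obtain ⟨t, hts, htcard⟩ := Set.exists_subset_encard_eq h3
  obtain ⟨w1, w2, w3, h12, h13, h23, rfl⟩ := Set.encard_eq_three.mp htcard
  have hw1 : (⋃ h ∈ Hij ie te Γ i i, h ⁻¹' {w1}).encard < 3 := hts (by simp)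
  have hw2 : (⋃ h ∈ Hij ie te Γ i i, h ⁻¹' {w2}).encard < 3 := hts (by simp)
  have hw3 : (⋃ h ∈ Hij ie te Γ i i, h ⁻¹' {w3}).encard < 3 := hts (by simp)
  set O : RSphere → Set RSphere := fun z => (⋃ h ∈ Hij ie te Γ i i, h ⁻¹' {z}) ∪ {z} with hO
  have hOfin : ∀ z : RSphere, (⋃ h ∈ Hij ie te Γ i i, h ⁻¹' {z}).encard < 3 → (O z).Finite := by
    intro z hz
    apply Set.Finite.union
    · exact Set.encard_ne_top_iff.mp (by intro h; rw [h] at hz; exact absurd hz (by simp))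
    · exact Set.finite_singleton z
  have hzO : ∀ z : RSphere, z ∈ O z := fun z => Or.inr rfl
  set A : Set RSphere := O w1 ∪ O w2 ∪ O w3 with hA
  have hAfin : A.Finite := ((hOfin w1 hw1).union (hOfin w2 hw2)).union (hOfin w3 hw3)
  have hw1A : w1 ∈ A := Or.inl (Or.inl (hzO w1))
  have hw2A : w2 ∈ A := Or.inl (Or.inr (hzO w2))
  have hw3A : w3 ∈ A := Or.inr (hzO w3)
  have hinv : ∀ h' ∈ Hij ie te Γ i i, h' ⁻¹' A ⊆ A := by
    intro h' hh' x hx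
    have key : ∀ z : RSphere, h' x ∈ O z → x ∈ O z := by
      intro z hz
      rcases hz with hz | hz
      · rw [Set.mem_iUnion₂] at hz
        obtain ⟨g, hg, hgx⟩ := hz
        left
        rw [Set.mem_iUnion₂]
        exact ⟨g ∘ h', St17.hword_trans hh' hg, hgx⟩
      · left
        rw [Set.mem_iUnion₂]
        exact ⟨h', hh', hz⟩
    rcases hx with (hx | hx) | hx
    · exact Or.inl (Or.inl (key w1 hx))
    · exact Or.inl (Or.inr (key w2 hx))
    · exact Or.inr (key w3 hx)
  -- every generator is a Möbius transformation
  have hgen : ∀ e, ∀ g ∈ Γ e, ∃ a b c d : ℂ, a * d - b * c ≠ 0 ∧ g = St17.moeb a b c d := by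
    intro e g hg
    obtain ⟨R⟩ := St17.isRatMap_rep (hrat e g hg)
    obtain ⟨g1, hg1⟩ := hirr i (ie e)
    obtain ⟨g2, hg2⟩ := hirr (te e) i
    have hh : HWord ie te Γ i i (g2 ∘ (g ∘ g1)) :=
      St17.hword_trans (HWord.comp hg1 hg rfl) hg2
    have hsurj1 : Function.Surjective g1 := St17.hword_surjective hrat hg1
    have hsurj2 : Function.Surjective g2 := St17.hword_surjective hrat hg2
    have hsurjg : Function.Surjective g := by
      obtain ⟨R'⟩ := St17.isRatMap_rep (hrat e g hg)
      exact R'.surj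
    have hsurjh : Function.Surjective (g2 ∘ (g ∘ g1)) := hsurj2.comp (hsurjg.comp hsurj1)
    obtain ⟨u1, hu1⟩ := hsurj2 w1
    obtain ⟨u2, hu2⟩ := hsurj2 w2
    obtain ⟨u3, hu3⟩ := hsurj2 w3
    have hd12 : u1 ≠ u2 := fun hc => h12 (by rw [← hu1, ← hu2, hc])
    have hd13 : u1 ≠ u3 := fun hc => h13 (by rw [← hu1, ← hu3, hc])
    have hd23 : u2 ≠ u3 := fun hc => h23 (by rw [← hu2, ← hu3, hc])
    have hfib : ∀ (wk uk : RSphere), wk ∈ A → g2 uk = wk → (g ⁻¹' {uk}).Subsingleton := by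
      intro wk uk hwk huk xx hxx yy hyy
      have hxx' : g xx = uk := hxx
      have hyy' : g yy = uk := hyy
      obtain ⟨xx', hgx⟩ := hsurj1 xx
      obtain ⟨yy', hgy⟩ := hsurj1 yy
      have h1 : (g2 ∘ (g ∘ g1)) xx' = wk := by
        simp only [Function.comp_apply, hgx, hxx', huk]
      have h2 : (g2 ∘ (g ∘ g1)) yy' = wk := by
        simp only [Function.comp_apply, hgy, hyy', huk]
      have hsub := St17.fiber_sub hAfin hsurjh (hinv _ hh) hwk
      have hxy : xx' = yy' := hsub h1 h2
      rw [← hgx, ← hgy, hxy]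
    have hsmall := R.small_of_three hd12 hd13 hd23
      (hfib w1 u1 hw1A hu1) (hfib w2 u2 hw2A hu2) (hfib w3 u3 hw3A hu3)
    exact R.exists_moeb hsmall
  -- the loop semigroup sits inside a finite set of Möbius maps preserving A
  set S : Set (RSphere → RSphere) :=
    {k | (∃ a b c d : ℂ, a * d - b * c ≠ 0 ∧ k = St17.moeb a b c d) ∧ Set.MapsTo k A A}
    with hS
  have hSfin : S.Finite := by
    rw [← Set.finite_coe_iff]
    have : Finite ↥A := hAfin.to_subtype
    let φ : ↥S → (↥A → ↥A) := fun k => (k.2.2).restrict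
    have hφ : Function.Injective φ := by
      intro k1 k2 hk
      obtain ⟨a, b, c, d, hdet, hk1⟩ := k1.2.1
      obtain ⟨a', b', c', d', hdet', hk2⟩ := k2.2.1
      have hag : ∀ x, x ∈ A → k1.val x = k2.val x := by
        intro x hx
        have := congrFun hk ⟨x, hx⟩
        exact Subtype.ext_iff.mp this
      apply Subtype.ext
      rw [hk1, hk2]
      exact St17.moeb_ext hdet hdet' h12 h13 h23
        (by rw [← hk1, ← hk2]; exact hag w1 hw1A)
        (by rw [← hk1, ← hk2]; exact hag w2 hw2A)
        (by rw [← hk1, ← hk2]; exact hag w3 hw3A)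
    exact Finite.of_injective φ hφ
  have hHiiS : ∀ h' ∈ Hij ie te Γ i i, h' ∈ S := by
    intro h' hh'
    obtain ⟨a, b, c, d, hdet, rfl⟩ := St17.hword_moeb hgen hh'
    have hbij := St17.moeb_bijective a b c d hdet
    have hpre : (St17.moeb a b c d) ⁻¹' A ⊆ A := hinv _ hh'
    have hcardeq : A.encard ≤ ((St17.moeb a b c d) ⁻¹' A).encard := by
      have himg : St17.moeb a b c d '' ((St17.moeb a b c d) ⁻¹' A) = A :=
        Set.image_preimage_eq A hbij.2
      calc A.encard = (St17.moeb a b c d '' ((St17.moeb a b c d) ⁻¹' A)).encard := by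
            rw [himg]
        _ = ((St17.moeb a b c d) ⁻¹' A).encard := Function.Injective.encard_image hbij.1 _
        _ ≤ _ := le_refl _
    have heq : (St17.moeb a b c d) ⁻¹' A = A :=
      Set.Finite.eq_of_subset_of_encard_le' hAfin hpre hcardeq
    refine ⟨⟨a, b, c, d, hdet, rfl⟩, ?_⟩
    intro x hx
    rw [← heq] at hx
    exact hx
  -- the whole family from vertex i is finite
  have hjm : ∀ j : V, ∃ gj : RSphere → RSphere, HWord ie te Γ j i gj ∧
      ∃ kj : RSphere → RSphere, kj ∘ gj = id := by
    intro j
    obtain ⟨gj, hgj⟩ := hirr j i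
    obtain ⟨a, b, c, d, hdet, rfl⟩ := St17.hword_moeb hgen hgj
    exact ⟨_, hgj, St17.moeb d (-b) (-c) a, St17.moeb_left_inv a b c d hdet⟩
  choose gj hgj kj hkj using hjm
  set Fam : Set (RSphere → RSphere) := {h | ∃ j, HWord ie te Γ i j h} with hFamdef
  have hFam : Fam.Finite := by
    apply Set.Finite.subset (Set.finite_iUnion fun j : V => hSfin.image (fun s => kj j ∘ s))
    rintro h' ⟨j, hh'⟩
    refine Set.mem_iUnion.mpr ⟨j, ⟨gj j ∘ h', hHiiS _ (St17.hword_trans hh' (hgj j)), ?_⟩⟩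
    show kj j ∘ (gj j ∘ h') = h'
    rw [← Function.comp_assoc, hkj j, Function.id_comp]
  have hcont : ∀ k ∈ Fam, Continuous k := by
    rintro k ⟨j, hk⟩
    obtain ⟨a, b, c, d, hdet, rfl⟩ := St17.hword_moeb hgen hk
    exact St17.moeb_continuous a b c d hdet
  have hJ : Julia ie te Γ i = ∅ := by
    rw [Julia, JuliaOf, Set.eq_empty_iff_forall_notMem]
    intro y hy
    apply hy
    refine ⟨Set.univ, Filter.univ_mem, fun z _ => ?_⟩
    exact @St17.equicontinuousAt_of_finite _ hFam.to_subtype _ _ _ _ _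
      (fun k => hcont k.1 k.2) z
  have hnon := hnonel i
  rw [hJ, Set.encard_empty] at hnon
  exact absurd hnon (by norm_num)
end
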